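/- arXiv:2506.02663 — 6 statements merged into one kernel-verified Lean document; each statement's English description precedes it below -/
import Mathlib

section
/- Let U ⊂ ℝ^n be open, I ⊂ ℝ an open interval, and ν ∈ ℝ with ν ≠ 0. Let w, u, g : I × U → ℝ^n, φ, q : I × U → ℝ all be smooth (C^∞). Suppose that on I × U: (i) w = u − ∇φ, (ii) ∇·u = 0, and (iii) ∂w/∂t = g − (u·∇)u − ∇q + ν·Δw. Let n ∈ ℝ^n be a fixed unit vector, and let (t₀, x₀) ∈ I × U be a point at which the interface condition n·∇q = n·(g − (u·∇)u + ν·Δu) − ∂(n·w)/∂t holds. Then n·∇(∇·w)(t₀, x₀) = 0. -/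
open Set

/-- Partial derivative of `f : ℝᴺ → ℝ` in the `i`-th coordinate direction. -/
noncomputable def pd {N : ℕ} (i : Fin N) (f : (Fin N → ℝ) → ℝ) (x : Fin N → ℝ) : ℝ :=
  fderiv ℝ f x (Pi.single i 1)

/-- Laplacian `Δf = Σᵢ ∂²f/∂xᵢ²`. -/
noncomputable def lap {N : ℕ} (f : (Fin N → ℝ) → ℝ) (x : Fin N → ℝ) : ℝ :=
  ∑ i, pd i (pd i f) x

/-- Divergence `∇·v = Σᵢ ∂vᵢ/∂xᵢ` of a vector field. -/
noncomputable def divg {N : ℕ} (v : (Fin N → ℝ) → (Fin N → ℝ)) (x : Fin N → ℝ) : ℝ :=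
  ∑ i, pd i (fun y => v y i) x

section Aux
variable {N : ℕ} {U : Set (Fin N → ℝ)} {f h : (Fin N → ℝ) → ℝ} {x : Fin N → ℝ}


lemma pd_congr_nhds (hfg : f =ᶠ[nhds x] h) (i : Fin N) : pd i f x = pd i h x := by
  unfold pd; rw [hfg.fderiv_eq]

lemma pd_congr_on (hU : IsOpen U) (hx : x ∈ U) (hfg : ∀ y ∈ U, f y = h y) (i : Fin N) :
    pd i f x = pd i h x :=
  pd_congr_nhds (by filter_upwards [hU.mem_nhds hx] using hfg) i

lemma differentiableAt_of_contDiffOn {E F : Type*} [NormedAddCommGroup E] [NormedSpace ℝ E]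
    [NormedAddCommGroup F] [NormedSpace ℝ F] {U : Set E} {x : E}
    {f : E → F} (hf : ContDiffOn ℝ (⊤ : ℕ∞) f U) (hU : IsOpen U)
    (hx : x ∈ U) : DifferentiableAt ℝ f x :=
  (hf.contDiffAt (hU.mem_nhds hx)).differentiableAt (by simp)

lemma pd_sub {a b : (Fin N → ℝ) → ℝ} (ha : DifferentiableAt ℝ a x)
    (hb : DifferentiableAt ℝ b x) (i : Fin N) :
    pd i (fun y => a y - b y) x = pd i a x - pd i b x := by
  unfold pd; rw [fderiv_fun_sub ha hb]; simp

lemma pd_neg {a : (Fin N → ℝ) → ℝ} (i : Fin N) :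
    pd i (fun y => -a y) x = -pd i a x := by
  unfold pd; rw [fderiv_fun_neg]; simp

lemma pd_sum {ι : Type*} (s : Finset ι) {F : ι → (Fin N → ℝ) → ℝ}
    (hF : ∀ j ∈ s, DifferentiableAt ℝ (F j) x) (i : Fin N) :
    pd i (fun y => ∑ j ∈ s, F j y) x = ∑ j ∈ s, pd i (F j) x := by
  unfold pd; rw [fderiv_fun_sum hF]; simp

lemma contDiffOn_pd (hf : ContDiffOn ℝ (⊤ : ℕ∞) f U) (hU : IsOpen U) (i : Fin N) :
    ContDiffOn ℝ (⊤ : ℕ∞) (pd i f) U := by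
  have h1 : ContDiffOn ℝ (⊤ : ℕ∞) (fderiv ℝ f) U :=
    hf.fderiv_of_isOpen hU (by exact_mod_cast le_top)
  exact (ContinuousLinearMap.apply ℝ ℝ (Pi.single i 1 : Fin N → ℝ)).contDiff.comp_contDiffOn h1

lemma pd_pd_eq (hf' : DifferentiableAt ℝ (fderiv ℝ f) x) (i j : Fin N) :
    pd i (pd j f) x = fderiv ℝ (fderiv ℝ f) x (Pi.single i 1) (Pi.single j 1) := by
  unfold pd
  rw [fderiv_clm_apply hf' (differentiableAt_const _)]
  simp

lemma pd_comm (hf : ContDiffOn ℝ (⊤ : ℕ∞) f U) (hU : IsOpen U) (hx : x ∈ U) (i j : Fin N) :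
    pd i (pd j f) x = pd j (pd i f) x := by
  have h1 : ContDiffOn ℝ (⊤ : ℕ∞) (fderiv ℝ f) U :=
    hf.fderiv_of_isOpen hU (by exact_mod_cast le_top)
  have hf' : DifferentiableAt ℝ (fderiv ℝ f) x :=
    differentiableAt_of_contDiffOn h1 hU hx
  have hsym : IsSymmSndFDerivAt ℝ f x :=
    (hf.contDiffAt (hU.mem_nhds hx)).isSymmSndFDerivAt
      (by rw [minSmoothness_of_isRCLikeNormedField]; exact_mod_cast ENat.natCast_le_of_coe_top_le_withTop le_rfl 2)
  rw [pd_pd_eq hf', pd_pd_eq hf']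
  exact hsym _ _

lemma slice_space {F : Type*} [NormedAddCommGroup F] [NormedSpace ℝ F]
    {G : ℝ → (Fin N → ℝ) → F} {I : Set ℝ} {t₀ : ℝ}
    (hG : ContDiffOn ℝ (⊤ : ℕ∞) (fun p : ℝ × (Fin N → ℝ) => G p.1 p.2) (I ×ˢ U))
    (ht : t₀ ∈ I) : ContDiffOn ℝ (⊤ : ℕ∞) (G t₀) U := by
  have : G t₀ = (fun p : ℝ × (Fin N → ℝ) => G p.1 p.2) ∘ (fun y => (t₀, y)) := rfl
  rw [this]
  exact hG.comp ((contDiff_const.prodMk contDiff_id).contDiffOn) (fun y hy => ⟨ht, hy⟩)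

end Aux

/-- If `w = u − ∇φ`, `∇·u = 0`, the momentum equation holds on `I × U`, and at a point
`(t₀, x₀)` the interface Neumann condition
`n·∇q = n·(g − (u·∇)u + νΔu) − ∂(n·w)/∂t` holds for a fixed unit vector `n`,
then `n·∇(∇·w)(t₀,x₀) = 0`. -/
theorem interface_condition_implies_homogeneous_neumann_for_div
    (N : ℕ) (U : Set (Fin N → ℝ)) (hU : IsOpen U)
    (I : Set ℝ) (hI : ∃ a b : ℝ, I = Ioo a b)
    (ν : ℝ) (hν : ν ≠ 0)
    (w u g : ℝ → (Fin N → ℝ) → (Fin N → ℝ)) (φ q : ℝ → (Fin N → ℝ) → ℝ)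
    (hw : ContDiffOn ℝ (⊤ : ℕ∞) (fun p : ℝ × (Fin N → ℝ) => w p.1 p.2) (I ×ˢ U))
    (hu : ContDiffOn ℝ (⊤ : ℕ∞) (fun p : ℝ × (Fin N → ℝ) => u p.1 p.2) (I ×ˢ U))
    (hg : ContDiffOn ℝ (⊤ : ℕ∞) (fun p : ℝ × (Fin N → ℝ) => g p.1 p.2) (I ×ˢ U))
    (hφ : ContDiffOn ℝ (⊤ : ℕ∞) (fun p : ℝ × (Fin N → ℝ) => φ p.1 p.2) (I ×ˢ U))
    (hq : ContDiffOn ℝ (⊤ : ℕ∞) (fun p : ℝ × (Fin N → ℝ) => q p.1 p.2) (I ×ˢ U))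
    (hwu : ∀ t ∈ I, ∀ x ∈ U, ∀ i, w t x i = u t x i - pd i (φ t) x)
    (hdiv : ∀ t ∈ I, ∀ x ∈ U, divg (u t) x = 0)
    (hmom : ∀ t ∈ I, ∀ x ∈ U, ∀ i,
      deriv (fun s => w s x i) t =
        g t x i - (∑ j, u t x j * pd j (fun y => u t y i) x) - pd i (q t) x
          + ν * lap (fun y => w t y i) x)
    (nv : Fin N → ℝ) (hnv : ∑ i, nv i ^ 2 = 1)
    (t₀ : ℝ) (x₀ : Fin N → ℝ) (ht₀ : t₀ ∈ I) (hx₀ : x₀ ∈ U)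
    (hint : ∑ i, nv i * pd i (q t₀) x₀ =
      (∑ i, nv i * (g t₀ x₀ i - (∑ j, u t₀ x₀ j * pd j (fun y => u t₀ y i) x₀)
          + ν * lap (fun y => u t₀ y i) x₀))
        - deriv (fun s => ∑ i, nv i * w s x₀ i) t₀) :
    ∑ i, nv i * pd i (divg (w t₀)) x₀ = 0 := by
  obtain ⟨a, b, rfl⟩ := hI
  have hIo : IsOpen (Ioo a b) := isOpen_Ioo
  have hPo : IsOpen (Ioo a b ×ˢ U) := hIo.prod hU
  have hpt : (t₀, x₀) ∈ Ioo a b ×ˢ U := ⟨ht₀, hx₀⟩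
  -- componentwise smoothness on the product
  have hwc : ∀ i, ContDiffOn ℝ (⊤ : ℕ∞) (fun p : ℝ × (Fin N → ℝ) => w p.1 p.2 i)
      (Ioo a b ×ˢ U) := fun i =>
    (ContinuousLinearMap.proj (R := ℝ) (φ := fun _ : Fin N => ℝ) i).contDiff.comp_contDiffOn hw
  have huc : ∀ i, ContDiffOn ℝ (⊤ : ℕ∞) (fun p : ℝ × (Fin N → ℝ) => u p.1 p.2 i)
      (Ioo a b ×ˢ U) := fun i =>
    (ContinuousLinearMap.proj (R := ℝ) (φ := fun _ : Fin N => ℝ) i).contDiff.comp_contDiffOn hu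
  -- spatial slices
  have hφ0 : ContDiffOn ℝ (⊤ : ℕ∞) (φ t₀) U := slice_space hφ ht₀
  have hu0 : ∀ i, ContDiffOn ℝ (⊤ : ℕ∞) (fun y => u t₀ y i) U := fun i =>
    slice_space (G := fun t y => u t y i) (huc i) ht₀
  have hw0 : ∀ i, ContDiffOn ℝ (⊤ : ℕ∞) (fun y => w t₀ y i) U := fun i =>
    slice_space (G := fun t y => w t y i) (hwc i) ht₀
  have hpdφ : ∀ i, ContDiffOn ℝ (⊤ : ℕ∞) (pd i (φ t₀)) U := fun i => contDiffOn_pd hφ0 hU i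
  -- Laplacian difference
  have hlapdiff : ∀ i, lap (fun y => w t₀ y i) x₀
      = lap (fun y => u t₀ y i) x₀ - lap (pd i (φ t₀)) x₀ := by
    intro i
    have hsubU : ∀ y ∈ U, ∀ j, pd j (fun z => w t₀ z i) y
        = pd j (fun z => u t₀ z i) y - pd j (pd i (φ t₀)) y := by
      intro y hy j
      have h1 : pd j (fun z => w t₀ z i) y
          = pd j (fun z => u t₀ z i - pd i (φ t₀) z) y :=
        pd_congr_on hU hy (fun z hz => hwu t₀ ht₀ z hz i) j
      rw [h1, pd_sub (differentiableAt_of_contDiffOn (hu0 i) hU hy)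
        (differentiableAt_of_contDiffOn (hpdφ i) hU hy) j]
    unfold lap
    rw [← Finset.sum_sub_distrib]
    refine Finset.sum_congr rfl fun j _ => ?_
    have h2 : pd j (pd j (fun z => w t₀ z i)) x₀
        = pd j (fun y => pd j (fun z => u t₀ z i) y - pd j (pd i (φ t₀)) y) x₀ :=
      pd_congr_on hU hx₀ (fun y hy => hsubU y hy j) j
    rw [h2, pd_sub (differentiableAt_of_contDiffOn (contDiffOn_pd (hu0 i) hU j) hU hx₀)
      (differentiableAt_of_contDiffOn (contDiffOn_pd (hpdφ i) hU j) hU hx₀) j]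
  -- divergence of w equals -lap φ on U
  have hdivW : ∀ y ∈ U, divg (w t₀) y = -lap (φ t₀) y := by
    intro y hy
    have h0 : divg (w t₀) y = divg (u t₀) y - lap (φ t₀) y := by
      unfold divg lap
      rw [← Finset.sum_sub_distrib]
      refine Finset.sum_congr rfl fun j _ => ?_
      have h1 : pd j (fun z => w t₀ z j) y
          = pd j (fun z => u t₀ z j - pd j (φ t₀) z) y :=
        pd_congr_on hU hy (fun z hz => hwu t₀ ht₀ z hz j) j
      rw [h1, pd_sub (differentiableAt_of_contDiffOn (hu0 j) hU hy)
        (differentiableAt_of_contDiffOn (hpdφ j) hU hy) j]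
    rw [h0, hdiv t₀ ht₀ y hy]; ring
  -- normal derivative of the divergence
  have hpdDiv : ∀ i, pd i (divg (w t₀)) x₀
      = lap (fun y => w t₀ y i) x₀ - lap (fun y => u t₀ y i) x₀ := by
    intro i
    have h1 : pd i (divg (w t₀)) x₀ = pd i (fun y => -lap (φ t₀) y) x₀ :=
      pd_congr_on hU hx₀ hdivW i
    have h3 : pd i (fun y => lap (φ t₀) y) x₀ = ∑ j, pd i (pd j (pd j (φ t₀))) x₀ := by
      have hrw : (fun y => lap (φ t₀) y) = fun y => ∑ j, pd j (pd j (φ t₀)) y := rfl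
      rw [hrw, pd_sum Finset.univ (fun j _ => differentiableAt_of_contDiffOn
        (contDiffOn_pd (hpdφ j) hU j) hU hx₀) i]
    have h4 : ∀ j, pd i (pd j (pd j (φ t₀))) x₀ = pd j (pd j (pd i (φ t₀))) x₀ := by
      intro j
      have c1 : pd i (pd j (pd j (φ t₀))) x₀ = pd j (pd i (pd j (φ t₀))) x₀ :=
        pd_comm (hpdφ j) hU hx₀ i j
      have c2 : pd j (pd i (pd j (φ t₀))) x₀ = pd j (pd j (pd i (φ t₀))) x₀ :=
        pd_congr_on hU hx₀ (fun y hy => pd_comm hφ0 hU hy i j) j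
      rw [c1, c2]
    have h5 : pd i (fun y => lap (φ t₀) y) x₀ = lap (pd i (φ t₀)) x₀ := by
      rw [h3]; exact Finset.sum_congr rfl fun j _ => h4 j
    rw [h1, pd_neg i, h5]
    have := hlapdiff i; linarith
  -- time differentiability of components
  have hwt : ∀ i, DifferentiableAt ℝ (fun s => w s x₀ i) t₀ := by
    intro i
    have hA : DifferentiableAt ℝ (fun p : ℝ × (Fin N → ℝ) => w p.1 p.2 i) (t₀, x₀) :=
      differentiableAt_of_contDiffOn (U := Ioo a b ×ˢ U) (hwc i) hPo hpt
    exact hA.comp t₀ ((differentiableAt_id (𝕜 := ℝ) (x := t₀)).prodMk (differentiableAt_const x₀))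
  have hderiv : deriv (fun s => ∑ i, nv i * w s x₀ i) t₀
      = ∑ i, nv i * deriv (fun s => w s x₀ i) t₀ := by
    rw [deriv_fun_sum (fun i _ => ((hwt i).const_mul (nv i)))]
    exact Finset.sum_congr rfl fun i _ => deriv_const_mul (nv i) (hwt i)
  -- key cancellation from momentum + interface condition
  have hkey : ∑ i, nv i * (lap (fun y => w t₀ y i) x₀ - lap (fun y => u t₀ y i) x₀) = 0 := by
    have hm : ∀ i ∈ Finset.univ, nv i * deriv (fun s => w s x₀ i) t₀ =
        nv i * (g t₀ x₀ i - (∑ j, u t₀ x₀ j * pd j (fun y => u t₀ y i) x₀) - pd i (q t₀) x₀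
          + ν * lap (fun y => w t₀ y i) x₀) := fun i _ => by rw [hmom t₀ ht₀ x₀ hx₀ i]
    rw [hderiv, Finset.sum_congr rfl hm] at hint
    have h6 : ∑ i, nv i * (ν * lap (fun y => w t₀ y i) x₀)
        = ∑ i, nv i * (ν * lap (fun y => u t₀ y i) x₀) := by
      simp only [mul_sub, mul_add, Finset.sum_add_distrib, Finset.sum_sub_distrib] at hint
      linarith
    have h7 : ν * ∑ i, nv i * (lap (fun y => w t₀ y i) x₀ - lap (fun y => u t₀ y i) x₀) = 0 := by
      calc ν * ∑ i, nv i * (lap (fun y => w t₀ y i) x₀ - lap (fun y => u t₀ y i) x₀)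
          = ∑ i, (nv i * (ν * lap (fun y => w t₀ y i) x₀)
              - nv i * (ν * lap (fun y => u t₀ y i) x₀)) := by
            rw [Finset.mul_sum]; exact Finset.sum_congr rfl fun i _ => by ring
        _ = 0 := by rw [Finset.sum_sub_distrib, h6, sub_self]
    exact (mul_eq_zero.mp h7).resolve_left hν
  have e : ∀ i ∈ Finset.univ, nv i * pd i (divg (w t₀)) x₀
      = nv i * (lap (fun y => w t₀ y i) x₀ - lap (fun y => u t₀ y i) x₀) := fun i _ => by
    rw [hpdDiv i]
  rw [Finset.sum_congr rfl e, hkey]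
end

section
/- Fix b ∈ ℝ and let f : ℝ → ℝ be of class C⁵ on an open neighborhood of the point b. Then, with A_j := (1/h) ∫_{b+jh}^{b+(j+1)h} f(x) dx, the first ghost-cell average satisfies A₀ = (1/12)·(−77A₋₁ + 43A₋₂ − 17A₋₃ + 3A₋₄) + 5·f(b) + O(h⁵) as h → 0⁺. -/
open Set MeasureTheory intervalIntegral

lemma idw_eq {F : ℝ → ℝ} {J : Set ℝ} (hJ : IsOpen J) {n : ℕ}
    (hF : ContDiffOn ℝ (n : ℕ∞) F J) {a c : ℝ} (hac : a < c) (hsub : Icc a c ⊆ J)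
    {m : ℕ} (hm : m ≤ n) {x : ℝ} (hx : x ∈ Icc a c) :
    iteratedDerivWithin m F (Icc a c) x = iteratedDeriv m F x := by
  have hs : HasFTaylorSeriesUpToOn (n : ℕ∞) F (ftaylorSeriesWithin ℝ F J) J :=
    hF.ftaylorSeriesWithin hJ.uniqueDiffOn
  have h1 : ftaylorSeriesWithin ℝ F J x m = iteratedFDerivWithin ℝ m F (Icc a c) x :=
    (hs.mono hsub).eq_iteratedFDerivWithin_of_uniqueDiffOn (by exact_mod_cast hm)
      (uniqueDiffOn_Icc hac) hx
  have h2 : ftaylorSeriesWithin ℝ F J x m = iteratedFDeriv ℝ m F x := by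
    have := iteratedFDerivWithin_of_isOpen (𝕜 := ℝ) (f := F) m hJ (hsub hx)
    simpa [ftaylorSeriesWithin] using this
  rw [iteratedDerivWithin_eq_iteratedFDerivWithin, iteratedDeriv_eq_iteratedFDeriv, ← h1, h2]

lemma taylor_poly_eq {F : ℝ → ℝ} {J : Set ℝ} (hJ : IsOpen J)
    (hF : ContDiffOn ℝ ((6 : ℕ) : ℕ∞) F J) {c : ℝ} (hc : 0 < c) (hsub : Icc 0 c ⊆ J) (x : ℝ) :
    taylorWithinEval F 5 (Icc 0 c) 0 x =
      iteratedDeriv 0 F 0 + iteratedDeriv 1 F 0 * x + iteratedDeriv 2 F 0 * x^2/2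
      + iteratedDeriv 3 F 0 * x^3/6 + iteratedDeriv 4 F 0 * x^4/24
      + iteratedDeriv 5 F 0 * x^5/120 := by
  rw [taylor_within_apply]
  have E : ∀ k, k ≤ 6 → iteratedDerivWithin k F (Icc 0 c) 0 = iteratedDeriv k F 0 :=
    fun k hk => idw_eq hJ hF hc hsub hk (left_mem_Icc.2 hc.le)
  rw [show (5+1) = 6 from rfl]
  simp only [Finset.sum_range_succ, Finset.sum_range_zero,
    E 0 (by norm_num), E 1 (by norm_num), E 2 (by norm_num), E 3 (by norm_num),
    E 4 (by norm_num), E 5 (by norm_num)]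
  norm_num [Nat.factorial]
  ring

/-- The average of `f` over the `j`-th cell `[b + jh, b + (j+1)h]`. -/
noncomputable def cellAvg (f : ℝ → ℝ) (b h : ℝ) (j : ℤ) : ℝ :=
  (1 / h) * ∫ x in (b + (j : ℝ) * h)..(b + ((j : ℝ) + 1) * h), f x

set_option maxHeartbeats 1000000 in
/-- First fifth-order ghost-cell filling formula for Dirichlet boundary conditions:
`A₀ = (1/12)(−77A₋₁ + 43A₋₂ − 17A₋₃ + 3A₋₄) + 5 f(b) + O(h⁵)`. -/
theorem ghost_cell_dirichlet_first_fifth_order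
    (b : ℝ) (f : ℝ → ℝ)
    (U : Set ℝ) (hU : IsOpen U) (hb : b ∈ U) (hf : ContDiffOn ℝ 5 f U) :
    ∃ M > 0, ∃ h₀ > 0, ∀ h : ℝ, 0 < h → h < h₀ →
      |cellAvg f b h 0 - ((1 / 12) * (-77 * cellAvg f b h (-1) + 43 * cellAvg f b h (-2)
        - 17 * cellAvg f b h (-3) + 3 * cellAvg f b h (-4)) + 5 * f b)| ≤ M * h ^ 5 := by
  obtain ⟨ε, hε, hball⟩ := Metric.isOpen_iff.1 hU b hb
  set δ : ℝ := ε / 6 with hδdef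
  have hδ : 0 < δ := by positivity
  have hsub : Icc (b - 5*δ) (b + 5*δ) ⊆ U := by
    intro y hy
    apply hball
    rw [Metric.mem_ball, Real.dist_eq, abs_lt]
    constructor <;> [nlinarith [hy.1]; nlinarith [hy.2]]
  set J : Set ℝ := Ioo (-(5*δ)) (5*δ) with hJdef
  have hJo : IsOpen J := isOpen_Ioo
  have hcf : ContinuousOn f U := hf.continuousOn
  have hmem : ∀ t ∈ J, b + t ∈ U := by
    intro t ht
    exact hsub ⟨by linarith [ht.1], by linarith [ht.2]⟩
  have hII : ∀ u v : ℝ, u ∈ Icc (b - 5*δ) (b + 5*δ) → v ∈ Icc (b - 5*δ) (b + 5*δ) →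
      IntervalIntegrable f volume u v := by
    intro u v hu hv
    exact ((hcf.mono hsub).mono (uIcc_subset_Icc hu hv)).intervalIntegrable
  set F : ℝ → ℝ := fun t => ∫ x in b..(b+t), f x with hFdef
  have hd : ∀ t ∈ J, HasDerivAt F (f (b+t)) t := by
    intro t ht
    have hca : ContinuousAt f (b + t) := hcf.continuousAt (hU.mem_nhds (hmem t ht))
    have hi : IntervalIntegrable f volume b (b + t) := by
      apply hII <;> constructor <;> [linarith; linarith; linarith [ht.1]; linarith [ht.2]]
    have h0 : HasDerivAt (fun u => ∫ x in b..u, f x) (f (b+t)) (b+t) :=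
      integral_hasDerivAt_right hi (ContinuousOn.stronglyMeasurableAtFilter hU hcf _
        (hmem t ht)) hca
    have := h0.comp t ((hasDerivAt_id t).const_add b)
    rw [mul_one] at this
    exact this
  have hF6 : ContDiffOn ℝ ((6:ℕ) : ℕ∞) F J := by
    rw [show (((6:ℕ) : ℕ∞) : WithTop ℕ∞) = 5 + 1 by norm_num,
      contDiffOn_succ_iff_deriv_of_isOpen hJo]
    refine ⟨fun t ht => ((hd t ht).differentiableAt).differentiableWithinAt, by simp, ?_⟩
    have : ContDiffOn ℝ 5 (fun t => f (b + t)) J :=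
      hf.comp ((contDiff_const.add contDiff_id).contDiffOn) hmem
    exact this.congr fun t ht => ((hd t ht).deriv).symm ▸ rfl
  set G : ℝ → ℝ := fun t => F (-t) with hGdef
  have hG6 : ContDiffOn ℝ ((6:ℕ) : ℕ∞) G J := by
    apply hF6.comp (contDiff_neg.contDiffOn)
    intro t ht
    exact ⟨by simpa using neg_lt_neg ht.2, by simpa using neg_lt_neg ht.1⟩
  have hc : (0:ℝ) < 4*δ := by linarith
  have hIccJ : Icc (0:ℝ) (4*δ) ⊆ J := fun y hy => ⟨by linarith [hy.1], by linarith [hy.2]⟩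
  obtain ⟨C₁, hC₁⟩ := exists_taylor_mean_remainder_bound (n := 5) hc.le (hF6.mono hIccJ)
  obtain ⟨C₂, hC₂⟩ := exists_taylor_mean_remainder_bound (n := 5) hc.le (hG6.mono hIccJ)
  set a : ℕ → ℝ := fun k => iteratedDeriv k F 0 with hadef
  have hF0 : F 0 = 0 := by simp [hFdef]
  have ha0 : a 0 = 0 := by simp [hadef, iteratedDeriv_zero, hF0]
  have h0J : (0:ℝ) ∈ J := ⟨by linarith, by linarith⟩
  have ha1 : a 1 = f b := by
    have := (hd 0 h0J).deriv
    simpa [hadef, iteratedDeriv_one] using this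
  have hGk : ∀ k : ℕ, iteratedDeriv k G 0 = (-1)^k * a k := by
    intro k
    have := iteratedDeriv_comp_neg k F 0
    simpa [hGdef, hadef, smul_eq_mul] using this
  set p : ℝ → ℝ := fun x => a 0 + a 1 * x + a 2 * x^2/2 + a 3 * x^3/6 + a 4 * x^4/24
    + a 5 * x^5/120 with hpdef
  set q : ℝ → ℝ := fun x => a 0 - a 1 * x + a 2 * x^2/2 - a 3 * x^3/6 + a 4 * x^4/24
    - a 5 * x^5/120 with hqdef
  have hPF : ∀ x ∈ Icc (0:ℝ) (4*δ), |F x - p x| ≤ |C₁| * x^6 := by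
    intro x hx
    have h1 := hC₁ x hx
    rw [taylor_poly_eq hJo hF6 hc hIccJ x, Real.norm_eq_abs, sub_zero] at h1
    calc |F x - p x| ≤ C₁ * x^(5+1) := h1
    _ = C₁ * x^6 := by norm_num
    _ ≤ |C₁| * x^6 := mul_le_mul_of_nonneg_right (le_abs_self C₁) (by positivity)
  have hPG : ∀ x ∈ Icc (0:ℝ) (4*δ), |G x - q x| ≤ |C₂| * x^6 := by
    intro x hx
    have h1 := hC₂ x hx
    rw [taylor_poly_eq hJo hG6 hc hIccJ x, Real.norm_eq_abs, sub_zero] at h1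
    simp only [hGk] at h1
    have h2 : ((-1:ℝ)^0 * a 0 + (-1:ℝ)^1 * a 1 * x + (-1:ℝ)^2 * a 2 * x^2/2
        + (-1:ℝ)^3 * a 3 * x^3/6 + (-1:ℝ)^4 * a 4 * x^4/24 + (-1:ℝ)^5 * a 5 * x^5/120)
        = q x := by
      simp only [hqdef]; norm_num; ring
    rw [h2] at h1
    calc |G x - q x| ≤ C₂ * x^(5+1) := h1
    _ = C₂ * x^6 := by norm_num
    _ ≤ |C₂| * x^6 := mul_le_mul_of_nonneg_right (le_abs_self C₂) (by positivity)
  refine ⟨(12*|C₁| + 30828*|C₂|)/12 + 1, by positivity, δ, hδ, ?_⟩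
  intro h hh0 hhδ
  have hmemI : ∀ m : ℝ, -4 ≤ m → m ≤ 1 → m * h ∈ Icc (-(4*δ)) δ :=
    fun m hm1 hm2 => ⟨by nlinarith, by nlinarith⟩
  have hFint : ∀ s t : ℝ, s ∈ Icc (-(4*δ)) δ → t ∈ Icc (-(4*δ)) δ →
      (∫ x in (b + s)..(b + t), f x) = F t - F s := by
    intro s t hs ht
    have h1 : IntervalIntegrable f volume b (b + s) := by
      apply hII <;> constructor <;> [linarith; linarith; linarith [hs.1]; linarith [hs.2]]
    have h2 : IntervalIntegrable f volume (b + s) (b + t) := by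
      apply hII <;> constructor <;>
        [linarith [hs.1]; linarith [hs.2]; linarith [ht.1]; linarith [ht.2]]
    have h3 := integral_add_adjacent_intervals h1 h2
    simp only [hFdef]
    linarith [h3]
  have key : ∀ j : ℤ, -4 ≤ j → j ≤ 0 →
      cellAvg f b h j = (1/h) * (F (((j:ℝ)+1)*h) - F ((j:ℝ)*h)) := by
    intro j hj1 hj2
    have hjr1 : (-4:ℝ) ≤ (j:ℝ) := by exact_mod_cast hj1
    have hjr2 : (j:ℝ) ≤ 0 := by exact_mod_cast hj2
    rw [cellAvg, hFint ((j:ℝ)*h) (((j:ℝ)+1)*h)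
      (hmemI (j:ℝ) hjr1 (by linarith)) (hmemI ((j:ℝ)+1) (by linarith) (by linarith))]
  have hA0 : cellAvg f b h 0 = (1/h) * (F (1*h) - 0) := by
    rw [key 0 (by norm_num) (by norm_num)]
    norm_num [hF0]
  have hA1 : cellAvg f b h (-1) = (1/h) * (0 - G (1*h)) := by
    rw [key (-1) (by norm_num) (by norm_num),
      show (((-1:ℤ):ℝ)+1)*h = 0 by push_cast; ring,
      show ((-1:ℤ):ℝ)*h = -(1*h) by push_cast; ring, hF0]
  have hA2 : cellAvg f b h (-2) = (1/h) * (G (1*h) - G (2*h)) := by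
    rw [key (-2) (by norm_num) (by norm_num),
      show (((-2:ℤ):ℝ)+1)*h = -(1*h) by push_cast; ring,
      show ((-2:ℤ):ℝ)*h = -(2*h) by push_cast; ring]
  have hA3 : cellAvg f b h (-3) = (1/h) * (G (2*h) - G (3*h)) := by
    rw [key (-3) (by norm_num) (by norm_num),
      show (((-3:ℤ):ℝ)+1)*h = -(2*h) by push_cast; ring,
      show ((-3:ℤ):ℝ)*h = -(3*h) by push_cast; ring]
  have hA4 : cellAvg f b h (-4) = (1/h) * (G (3*h) - G (4*h)) := by
    rw [key (-4) (by norm_num) (by norm_num),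
      show (((-4:ℤ):ℝ)+1)*h = -(3*h) by push_cast; ring,
      show ((-4:ℤ):ℝ)*h = -(4*h) by push_cast; ring]
  -- error bounds at the five points
  have hhI : ∀ m : ℝ, 0 ≤ m → m ≤ 4 → m*h ∈ Icc (0:ℝ) (4*δ) :=
    fun m hm1 hm2 => ⟨by positivity, by nlinarith⟩
  have b1 := hPF (1*h) (hhI 1 (by norm_num) (by norm_num))
  have b2 := hPG (1*h) (hhI 1 (by norm_num) (by norm_num))
  have b3 := hPG (2*h) (hhI 2 (by norm_num) (by norm_num))
  have b4 := hPG (3*h) (hhI 3 (by norm_num) (by norm_num))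
  have b5 := hPG (4*h) (hhI 4 (by norm_num) (by norm_num))
  rw [show ((1:ℝ)*h)^6 = h^6 by ring] at b1 b2
  rw [show ((2:ℝ)*h)^6 = 64*h^6 by ring, show |C₂| * (64*h^6) = 64*(|C₂| * h^6) by ring] at b3
  rw [show ((3:ℝ)*h)^6 = 729*h^6 by ring, show |C₂| * (729*h^6) = 729*(|C₂| * h^6) by ring] at b4
  rw [show ((4:ℝ)*h)^6 = 4096*h^6 by ring,
    show |C₂| * (4096*h^6) = 4096*(|C₂| * h^6) by ring] at b5
  -- the main algebraic identity
  have hXeq : cellAvg f b h 0 - ((1 / 12) * (-77 * cellAvg f b h (-1) + 43 * cellAvg f b h (-2)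
        - 17 * cellAvg f b h (-3) + 3 * cellAvg f b h (-4)) + 5 * f b)
      = (12*(F (1*h) - p (1*h)) - 120*(G (1*h) - q (1*h)) + 60*(G (2*h) - q (2*h))
        - 20*(G (3*h) - q (3*h)) + 3*(G (4*h) - q (4*h))) / (12*h) := by
    rw [hA0, hA1, hA2, hA3, hA4, ← ha1]
    simp only [hpdef, hqdef]
    rw [ha0]
    have hne : h ≠ 0 := ne_of_gt hh0
    field_simp
    ring
  rw [hXeq, abs_div, abs_of_pos (by positivity : (0:ℝ) < 12*h)]
  have hE : |12*(F (1*h) - p (1*h)) - 120*(G (1*h) - q (1*h)) + 60*(G (2*h) - q (2*h))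
      - 20*(G (3*h) - q (3*h)) + 3*(G (4*h) - q (4*h))|
      ≤ (12*|C₁| + 30828*|C₂|) * h^6 := by
    have t1 := abs_le.mp b1
    have t2 := abs_le.mp b2
    have t3 := abs_le.mp b3
    have t4 := abs_le.mp b4
    have t5 := abs_le.mp b5
    rw [abs_le]
    constructor <;> nlinarith [t1.1, t1.2, t2.1, t2.2, t3.1, t3.2, t4.1, t4.2, t5.1, t5.2]
  calc |12*(F (1*h) - p (1*h)) - 120*(G (1*h) - q (1*h)) + 60*(G (2*h) - q (2*h))
      - 20*(G (3*h) - q (3*h)) + 3*(G (4*h) - q (4*h))| / (12*h)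
      ≤ ((12*|C₁| + 30828*|C₂|) * h^6) / (12*h) := by gcongr
  _ = ((12*|C₁| + 30828*|C₂|)/12) * h^5 := by
      field_simp
  _ ≤ ((12*|C₁| + 30828*|C₂|)/12 + 1) * h^5 := by
      have := pow_pos hh0 5
      nlinarith
end

section
/- Fix b ∈ ℝ and let f : ℝ → ℝ be of class C⁵ on an open neighborhood of the point b. Then, with A_j := (1/h) ∫_{b+jh}^{b+(j+1)h} f(x) dx, the second ghost-cell average satisfies A₁ = (1/12)·(−505A₋₁ + 335A₋₂ − 145A₋₃ + 27A₋₄) + 25·f(b) + O(h⁵) as h → 0⁺. -/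
open Set MeasureTheory intervalIntegral

lemma integ_pow (a₁ a₂ c : ℝ) (k : ℕ) :
    ∫ x in a₁..a₂, (x - c) ^ k = ((a₂ - c) ^ (k+1) - (a₁ - c) ^ (k+1)) / (k+1) := by
  have := intervalIntegral.integral_comp_sub_right (a := a₁) (b := a₂) (fun u : ℝ => u ^ k) c
  rw [this, integral_pow]

lemma cellAvg_poly (c0 c1 c2 c3 c4 b h : ℝ) (j : ℤ) :
    cellAvg (fun x => c0 + c1*(x-b)^1 + c2*(x-b)^2 + c3*(x-b)^3 + c4*(x-b)^4) b h j
    = (1/h) * (c0 * h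
      + c1 * ((((j:ℝ)+1)*h)^2 - ((j:ℝ)*h)^2)/2 + c2 * ((((j:ℝ)+1)*h)^3 - ((j:ℝ)*h)^3)/3
      + c3 * ((((j:ℝ)+1)*h)^4 - ((j:ℝ)*h)^4)/4 + c4 * ((((j:ℝ)+1)*h)^5 - ((j:ℝ)*h)^5)/5) := by
  have ii : ∀ (c : ℝ) (k : ℕ) (A B : ℝ),
      IntervalIntegrable (fun x => c*(x-b)^k) MeasureTheory.volume A B := fun c k A B =>
    (continuous_const.mul ((continuous_id.sub continuous_const).pow k)).intervalIntegrable _ _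
  have key : ∀ (c : ℝ) (k : ℕ) (A B : ℝ),
      ∫ x in A..B, c*(x-b)^k = c * (((B-b)^(k+1) - (A-b)^(k+1))/(k+1)) := by
    intro c k A B
    rw [intervalIntegral.integral_const_mul, integ_pow]
  unfold cellAvg
  rw [intervalIntegral.integral_add (((continuous_const.intervalIntegrable _ _).add
      (ii c1 1 _ _)).add (ii c2 2 _ _) |>.add (ii c3 3 _ _)) (ii c4 4 _ _),
    intervalIntegral.integral_add (((continuous_const.intervalIntegrable _ _).add
      (ii c1 1 _ _)).add (ii c2 2 _ _)) (ii c3 3 _ _),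
    intervalIntegral.integral_add ((continuous_const.intervalIntegrable _ _).add
      (ii c1 1 _ _)) (ii c2 2 _ _),
    intervalIntegral.integral_add (continuous_const.intervalIntegrable _ _) (ii c1 1 _ _),
    intervalIntegral.integral_const, key, key, key, key]
  simp only [smul_eq_mul]
  congr 1
  ring

/-- The degree-4 Taylor polynomial of `f` at `b` (with global iterated derivatives). -/
noncomputable def taylorPoly (f : ℝ → ℝ) (b : ℝ) : ℝ → ℝ := fun x =>
  f b + iteratedDeriv 1 f b * (x-b)^1 + (iteratedDeriv 2 f b / 2) * (x-b)^2
    + (iteratedDeriv 3 f b / 6) * (x-b)^3 + (iteratedDeriv 4 f b / 24) * (x-b)^4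

lemma taylorPoly_continuous (f : ℝ → ℝ) (b : ℝ) : Continuous (taylorPoly f b) := by
  unfold taylorPoly
  exact (((continuous_const.add
    (continuous_const.mul ((continuous_id.sub continuous_const).pow 1))).add
    (continuous_const.mul ((continuous_id.sub continuous_const).pow 2))).add
    (continuous_const.mul ((continuous_id.sub continuous_const).pow 3))).add
    (continuous_const.mul ((continuous_id.sub continuous_const).pow 4))

lemma taylorPoly_identity (f : ℝ → ℝ) (b h : ℝ) (hh : h ≠ 0) :
    cellAvg (taylorPoly f b) b h 1 = (1 / 12) * (-505 * cellAvg (taylorPoly f b) b h (-1)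
      + 335 * cellAvg (taylorPoly f b) b h (-2) - 145 * cellAvg (taylorPoly f b) b h (-3)
      + 27 * cellAvg (taylorPoly f b) b h (-4)) + 25 * f b := by
  unfold taylorPoly
  rw [cellAvg_poly, cellAvg_poly, cellAvg_poly, cellAvg_poly, cellAvg_poly]
  push_cast
  field_simp
  ring

lemma iterDW_eq {f : ℝ → ℝ} {U : Set ℝ} (hU : IsOpen U) (hf : ContDiffOn ℝ 5 f U)
    {a c x : ℝ} (hac : a < c) (hsub : Icc a c ⊆ U) (hx : x ∈ Icc a c) {m : ℕ} (hm : m ≤ 5) :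
    iteratedDerivWithin m f (Icc a c) x = iteratedDeriv m f x := by
  have H : HasFTaylorSeriesUpToOn 5 f (ftaylorSeriesWithin ℝ f U) (Icc a c) :=
    (hf.ftaylorSeriesWithin hU.uniqueDiffOn).mono hsub
  have e1 := H.eq_iteratedFDerivWithin_of_uniqueDiffOn (by exact_mod_cast hm)
    (uniqueDiffOn_Icc hac) hx
  have e2 : ftaylorSeriesWithin ℝ f U x m = iteratedFDeriv ℝ m f x :=
    iteratedFDerivWithin_of_isOpen m hU (hsub hx)
  rw [iteratedDerivWithin_eq_iteratedFDerivWithin, iteratedDeriv_eq_iteratedFDeriv, ← e1, e2]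

lemma iterDeriv_reflect (f : ℝ → ℝ) (b : ℝ) (k : ℕ) :
    iteratedDeriv k (fun x => f (2*b - x)) b = (-1:ℝ)^k * iteratedDeriv k f b := by
  calc iteratedDeriv k (fun x => f (2*b - x)) b
      = iteratedDeriv k (fun x : ℝ => (fun z : ℝ => f (2*b + z)) (-x)) b := by
        congr 1
    _ = (-1:ℝ)^k • iteratedDeriv k (fun z : ℝ => f (2*b + z)) (-b) :=
        iteratedDeriv_comp_neg k (fun z : ℝ => f (2*b + z)) b
    _ = (-1:ℝ)^k * iteratedDeriv k f b := by
        rw [iteratedDeriv_comp_const_add, smul_eq_mul]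
        ring_nf

set_option maxHeartbeats 2000000 in
/-- Second fifth-order ghost-cell filling formula for Dirichlet boundary conditions:
`A₁ = (1/12)(−505A₋₁ + 335A₋₂ − 145A₋₃ + 27A₋₄) + 25 f(b) + O(h⁵)`. -/
theorem ghost_cell_dirichlet_second_fifth_order
    (b : ℝ) (f : ℝ → ℝ)
    (U : Set ℝ) (hU : IsOpen U) (hb : b ∈ U) (hf : ContDiffOn ℝ 5 f U) :
    ∃ M > 0, ∃ h₀ > 0, ∀ h : ℝ, 0 < h → h < h₀ →
      |cellAvg f b h 1 - ((1 / 12) * (-505 * cellAvg f b h (-1) + 335 * cellAvg f b h (-2)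
        - 145 * cellAvg f b h (-3) + 27 * cellAvg f b h (-4)) + 25 * f b)| ≤ M * h ^ 5 := by
  obtain ⟨r, hr0, hrU⟩ := Metric.isOpen_iff.1 hU b hb
  set ε : ℝ := r / 2 with hεdef
  have hε0 : 0 < ε := by positivity
  have hsub : Icc (b - ε) (b + ε) ⊆ U := by
    intro x hx
    apply hrU
    rw [Metric.mem_ball, Real.dist_eq]
    have h1 : -ε ≤ x - b := by linarith [hx.1]
    have h2 : x - b ≤ ε := by linarith [hx.2]
    have := abs_le.2 ⟨h1, h2⟩
    linarith
  have hsubR : Icc b (b + ε) ⊆ U := fun x hx => hsub ⟨by linarith [hx.1], hx.2⟩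
  -- the reflected function
  set g : ℝ → ℝ := fun x => f (2*b - x) with hgdef
  set Ug : Set ℝ := (fun x : ℝ => 2*b - x) ⁻¹' U with hUgdef
  have hUgopen : IsOpen Ug := (continuous_const.sub continuous_id).isOpen_preimage _ hU
  have hg : ContDiffOn ℝ 5 g Ug :=
    hf.comp ((contDiff_const.sub contDiff_id).contDiffOn) (fun x hx => hx)
  have hsubg : Icc b (b + ε) ⊆ Ug := by
    intro x hx
    have : 2*b - x ∈ Icc (b - ε) (b + ε) := ⟨by linarith [hx.2], by linarith [hx.1]⟩
    exact hsub this
  -- Taylor bounds on both sides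
  have hfI : ContDiffOn ℝ (4 + 1 : ℕ) f (Icc b (b + ε)) := by
    exact_mod_cast hf.mono hsubR
  have hgI : ContDiffOn ℝ (4 + 1 : ℕ) g (Icc b (b + ε)) := by
    exact_mod_cast hg.mono hsubg
  have hbe : b ≤ b + ε := by linarith
  have hbe' : b < b + ε := by linarith
  obtain ⟨C₁, hC₁⟩ := exists_taylor_mean_remainder_bound hbe hfI
  obtain ⟨C₂, hC₂⟩ := exists_taylor_mean_remainder_bound hbe hgI
  -- the Taylor polynomial
  set P : ℝ → ℝ := taylorPoly f b with hPdef
  -- Taylor evals coincide with P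
  have hTf : ∀ x : ℝ, taylorWithinEval f 4 (Icc b (b + ε)) b x = P x := by
    intro x
    have e : ∀ m : ℕ, m ≤ 5 →
        iteratedDerivWithin m f (Icc b (b + ε)) b = iteratedDeriv m f b :=
      fun m hm => iterDW_eq hU hf hbe' hsubR (left_mem_Icc.2 hbe) hm
    rw [taylor_within_apply]
    simp only [Finset.sum_range_succ, Finset.sum_range_zero, smul_eq_mul,
      e 0 (by norm_num), e 1 (by norm_num), e 2 (by norm_num), e 3 (by norm_num),
      e 4 (by norm_num)]
    simp only [hPdef, taylorPoly, iteratedDeriv_zero]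
    norm_num [Nat.factorial]
    ring
  have hTg : ∀ x : ℝ, taylorWithinEval g 4 (Icc b (b + ε)) b (2*b - x) = P x := by
    intro x
    have e : ∀ m : ℕ, m ≤ 5 →
        iteratedDerivWithin m g (Icc b (b + ε)) b = (-1:ℝ)^m * iteratedDeriv m f b := by
      intro m hm
      rw [iterDW_eq hUgopen hg hbe' hsubg (left_mem_Icc.2 hbe) hm]
      exact iterDeriv_reflect f b m
    rw [taylor_within_apply]
    simp only [Finset.sum_range_succ, Finset.sum_range_zero, smul_eq_mul,
      e 0 (by norm_num), e 1 (by norm_num), e 2 (by norm_num), e 3 (by norm_num),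
      e 4 (by norm_num)]
    simp only [hPdef, taylorPoly, iteratedDeriv_zero]
    norm_num [Nat.factorial]
    ring
  -- uniform constant
  set C : ℝ := max (max C₁ C₂) 1 with hCdef
  have hC0 : (1:ℝ) ≤ C := le_max_right _ _
  have hCpos : (0:ℝ) < C := lt_of_lt_of_le one_pos hC0
  -- pointwise bound
  have hPB : ∀ x ∈ Icc (b - ε) (b + ε), |f x - P x| ≤ C * |x - b| ^ 5 := by
    intro x hx
    rcases le_or_gt b x with hxb | hxb
    · have hmem : x ∈ Icc b (b + ε) := ⟨hxb, hx.2⟩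
      have := hC₁ x hmem
      rw [hTf x] at this
      have h5 : (x - b) ^ 5 = |x - b| ^ 5 := by
        rw [abs_of_nonneg (by linarith)]
      calc |f x - P x| ≤ C₁ * (x - b) ^ (4+1) := this
        _ = C₁ * |x - b| ^ 5 := by rw [← h5]
        _ ≤ C * |x - b| ^ 5 := by
            have : C₁ ≤ C := le_trans (le_max_left _ _) (le_max_left _ _)
            exact mul_le_mul_of_nonneg_right this (by positivity)
    · have hmem : 2*b - x ∈ Icc b (b + ε) := ⟨by linarith, by linarith [hx.1]⟩
      have := hC₂ (2*b - x) hmem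
      have hgx : g (2*b - x) = f x := by
        simp only [hgdef]; ring_nf
      rw [hTg x, hgx] at this
      have h5 : (2*b - x - b) ^ (4+1) = |x - b| ^ 5 := by
        rw [abs_of_nonpos (by linarith)]; ring
      calc |f x - P x| ≤ C₂ * (2*b - x - b) ^ (4+1) := this
        _ = C₂ * |x - b| ^ 5 := by rw [h5]
        _ ≤ C * |x - b| ^ 5 := by
            have : C₂ ≤ C := le_trans (le_max_right _ _) (le_max_left _ _)
            exact mul_le_mul_of_nonneg_right this (by positivity)
  -- main bound
  refine ⟨100000 * C, by positivity, ε / 4, by positivity, fun h hh0 hh1 => ?_⟩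
  have hhne : h ≠ 0 := ne_of_gt hh0
  -- per-cell estimate
  have cellb : ∀ j : ℤ, -4 ≤ j → j ≤ 1 →
      |cellAvg f b h j - cellAvg P b h j| ≤ 1024 * C * h ^ 5 := by
    intro j hj4 hj1
    have hjr4 : (-4:ℝ) ≤ (j:ℝ) := by exact_mod_cast hj4
    have hjr1 : (j:ℝ) ≤ 1 := by exact_mod_cast hj1
    set A : ℝ := b + (j:ℝ) * h with hA
    set B : ℝ := b + ((j:ℝ) + 1) * h with hB
    have hAB : A ≤ B := by simp only [hA, hB]; nlinarith
    have hcell : Icc A B ⊆ Icc (b - ε) (b + ε) := by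
      intro x hx
      constructor
      · have : b - 4*h ≤ A := by simp only [hA]; nlinarith
        have : b - ε ≤ b - 4*h := by linarith
        linarith [hx.1, (by simp only [hA]; nlinarith : b - 4*h ≤ A)]
      · have h1 : B ≤ b + 2*h := by simp only [hB]; nlinarith
        have h2 : b + 2*h ≤ b + ε := by linarith
        linarith [hx.2]
    have hcellU : Icc A B ⊆ U := fun x hx => hsub (hcell hx)
    have hif : IntervalIntegrable f MeasureTheory.volume A B := by
      apply ContinuousOn.intervalIntegrable
      apply (hf.continuousOn).mono
      rwa [uIcc_of_le hAB]
    have hiP : IntervalIntegrable P MeasureTheory.volume A B :=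
      (taylorPoly_continuous f b).intervalIntegrable _ _
    have hdiff : cellAvg f b h j - cellAvg P b h j = (1/h) * ∫ x in A..B, (f x - P x) := by
      unfold cellAvg
      rw [intervalIntegral.integral_sub hif hiP]
      ring
    rw [hdiff]
    have hbound : ∀ x ∈ Set.uIoc A B, ‖f x - P x‖ ≤ C * (4*h) ^ 5 := by
      intro x hx
      rw [uIoc_of_le hAB] at hx
      have hxI : x ∈ Icc (b - ε) (b + ε) := hcell ⟨le_of_lt hx.1, hx.2⟩
      have hxb : |x - b| ≤ 4*h := by
        rw [abs_le]
        constructor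
        · have : b - 4*h ≤ A := by simp only [hA]; nlinarith
          linarith [hx.1]
        · have : B ≤ b + 2*h := by simp only [hB]; nlinarith
          have := hx.2
          linarith
      calc ‖f x - P x‖ = |f x - P x| := rfl
        _ ≤ C * |x - b| ^ 5 := hPB x hxI
        _ ≤ C * (4*h) ^ 5 := by
            apply mul_le_mul_of_nonneg_left _ (le_of_lt hCpos)
            exact pow_le_pow_left₀ (abs_nonneg _) hxb 5
    have := intervalIntegral.norm_integral_le_of_norm_le_const hbound
    have hBA : |B - A| = h := by
      simp only [hA, hB]
      rw [show b + ((j:ℝ) + 1) * h - (b + (j:ℝ) * h) = h by ring, abs_of_pos hh0]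
    rw [hBA] at this
    calc |(1/h) * ∫ x in A..B, (f x - P x)| = (1/h) * |∫ x in A..B, (f x - P x)| := by
          rw [abs_mul, abs_of_pos (by positivity : (0:ℝ) < 1/h)]
      _ ≤ (1/h) * (C * (4*h) ^ 5 * h) := by
          apply mul_le_mul_of_nonneg_left this (by positivity)
      _ = 1024 * C * h ^ 5 := by field_simp; ring
  -- the exact polynomial identity
  have hid := taylorPoly_identity f b h hhne
  rw [← hPdef] at hid
  -- assemble
  have hE1 := cellb 1 (by norm_num) (by norm_num)
  have hEm1 := cellb (-1) (by norm_num) (by norm_num)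
  have hEm2 := cellb (-2) (by norm_num) (by norm_num)
  have hEm3 := cellb (-3) (by norm_num) (by norm_num)
  have hEm4 := cellb (-4) (by norm_num) (by norm_num)
  set E1 := cellAvg f b h 1 - cellAvg P b h 1
  set Em1 := cellAvg f b h (-1) - cellAvg P b h (-1)
  set Em2 := cellAvg f b h (-2) - cellAvg P b h (-2)
  set Em3 := cellAvg f b h (-3) - cellAvg P b h (-3)
  set Em4 := cellAvg f b h (-4) - cellAvg P b h (-4)
  have hexpr : cellAvg f b h 1 - ((1 / 12) * (-505 * cellAvg f b h (-1)
      + 335 * cellAvg f b h (-2) - 145 * cellAvg f b h (-3) + 27 * cellAvg f b h (-4))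
      + 25 * f b)
      = E1 - (1/12) * (-505 * Em1 + 335 * Em2 - 145 * Em3 + 27 * Em4) := by
    simp only [E1, Em1, Em2, Em3, Em4]
    linear_combination hid
  rw [hexpr]
  have b1 := abs_le.1 hE1
  have b2 := abs_le.1 hEm1
  have b3 := abs_le.1 hEm2
  have b4 := abs_le.1 hEm3
  have b5 := abs_le.1 hEm4
  set D : ℝ := 1024 * C * h ^ 5 with hD
  rw [show (100000:ℝ) * C * h ^ 5 = (100000/1024) * D by rw [hD]; ring]
  clear_value E1 Em1 Em2 Em3 Em4 D
  rw [abs_le]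
  constructor <;> linarith [b1.1, b1.2, b2.1, b2.2, b3.1, b3.2, b4.1, b4.2, b5.1, b5.2]
end

section
/- Fix b ∈ ℝ and let f : ℝ → ℝ be of class C⁵ on an open neighborhood of the point b. Then, with A_j := (1/h) ∫_{b+jh}^{b+(j+1)h} f(x) dx, the first ghost-cell average satisfies A₀ = (1/10)·(5A₋₁ + 9A₋₂ − 5A₋₃ + A₋₄) + (6h/5)·f'(b) + O(h⁵) as h → 0⁺. -/
open Set MeasureTheory intervalIntegral

/-- iterated within-deriv on a set with unique differentiability inside an open set where
`f` is `C^n` agrees with the global iterated derivative. -/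
lemma iterDW_eq_iterD {f : ℝ → ℝ} {U s : Set ℝ} (hUo : IsOpen U) (hsU : s ⊆ U)
    (hs : UniqueDiffOn ℝ s) :
    ∀ (n : ℕ), ContDiffOn ℝ n f U → ∀ x ∈ s, iteratedDerivWithin n f s x = iteratedDeriv n f x := by
  intro n
  induction n with
  | zero => intro _ x hx; simp
  | succ n IH =>
    intro hf x hx
    have hfn : ContDiffOn ℝ n f U := hf.of_le (by exact_mod_cast Nat.le_succ n)
    have hopen : ∀ y ∈ U, iteratedDerivWithin n f U y = iteratedDeriv n f y := by
      intro y hy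
      rw [iteratedDerivWithin_eq_iteratedFDerivWithin, iteratedDeriv_eq_iteratedFDeriv,
        iteratedFDerivWithin_of_isOpen n hUo hy]
    have hdiffU : DifferentiableOn ℝ (iteratedDeriv n f) U := by
      have := hf.differentiableOn_iteratedDerivWithin (m := n)
        (by exact_mod_cast Nat.lt_succ_self n) hUo.uniqueDiffOn
      exact this.congr fun y hy => (hopen y hy).symm
    have hdiff : DifferentiableAt ℝ (iteratedDeriv n f) x :=
      (hdiffU x (hsU hx)).differentiableAt (hUo.mem_nhds (hsU hx))
    rw [iteratedDerivWithin_succ,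
      derivWithin_congr (fun y hy => IH hfn y hy) (IH hfn x hx),
      hdiff.derivWithin (hs x hx), ← iteratedDeriv_succ]


lemma integral_cell (c0 c1 c2 c3 c4 b a c : ℝ) :
    (∫ x in a..c, (c0 + c1*(x-b) + c2*(x-b)^2 + c3*(x-b)^3 + c4*(x-b)^4)) =
      (c0*(c-b) + c1/2*(c-b)^2 + c2/3*(c-b)^3 + c3/4*(c-b)^4 + c4/5*(c-b)^5)
      - (c0*(a-b) + c1/2*(a-b)^2 + c2/3*(a-b)^3 + c3/4*(a-b)^4 + c4/5*(a-b)^5) := by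
  have key : ∀ x ∈ uIcc a c,
      HasDerivAt (fun x => c0*(x-b) + c1/2*(x-b)^2 + c2/3*(x-b)^3 + c3/4*(x-b)^4 + c4/5*(x-b)^5)
        (c0 + c1*(x-b) + c2*(x-b)^2 + c3*(x-b)^3 + c4*(x-b)^4) x := by
    intro x _
    have h1 : HasDerivAt (fun x : ℝ => x - b) 1 x := (hasDerivAt_id x).sub_const b
    have t0 := h1.const_mul c0
    have t1 := (h1.pow 2).const_mul (c1/2)
    have t2 := (h1.pow 3).const_mul (c2/3)
    have t3 := (h1.pow 4).const_mul (c3/4)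
    have t4 := (h1.pow 5).const_mul (c4/5)
    refine HasDerivAt.congr_deriv ((((t0.add t1).add t2).add t3).add t4) ?_
    ring
  rw [integral_eq_sub_of_hasDerivAt key (Continuous.intervalIntegrable (by fun_prop) a c)]

lemma taylor_two_sided {f : ℝ → ℝ} {U : Set ℝ} (hUo : IsOpen U) {b ε : ℝ} (hε : 0 < ε)
    (hsub : Icc (b - ε) (b + ε) ⊆ U) (hf : ContDiffOn ℝ 5 f U) :
    ∃ K ≥ 0, ∀ x ∈ Icc (b - ε) (b + ε),
      |f x - (iteratedDeriv 0 f b + iteratedDeriv 1 f b * (x - b)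
        + iteratedDeriv 2 f b / 2 * (x - b) ^ 2 + iteratedDeriv 3 f b / 6 * (x - b) ^ 3
        + iteratedDeriv 4 f b / 24 * (x - b) ^ 4)| ≤ K * |x - b| ^ 5 := by
  have hbb : b < b + ε := by linarith
  set I : Set ℝ := Icc b (b + ε) with hI
  have hIsub : I ⊆ Icc (b - ε) (b + ε) := Icc_subset_Icc (by linarith) le_rfl
  have hIU : I ⊆ U := hIsub.trans hsub
  have hbI : b ∈ I := ⟨le_rfl, by linarith⟩
  -- the reflected function
  set g : ℝ → ℝ := fun x => f (2 * b - x) with hg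
  set U' : Set ℝ := (fun x : ℝ => 2 * b - x) ⁻¹' U with hU'
  have hU'o : IsOpen U' := hUo.preimage (continuous_const.sub continuous_id)
  have hgU' : ContDiffOn ℝ 5 g U' :=
    hf.comp ((contDiff_const.sub contDiff_id).contDiffOn) (fun x hx => hx)
  have hIU' : I ⊆ U' := by
    intro x hx
    have : 2 * b - x ∈ Icc (b - ε) (b + ε) := ⟨by simp at hx ⊢; linarith [hx.2], by
      simp at hx ⊢; linarith [hx.1]⟩
    exact hsub this
  have hfI : ContDiffOn ℝ ((4 : ℕ) + 1) f I := by exact_mod_cast hf.mono hIU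
  have hgI : ContDiffOn ℝ ((4 : ℕ) + 1) g I := by exact_mod_cast hgU'.mono hIU'
  -- bounds on 5-th derivatives
  obtain ⟨Cf, hCf⟩ := isCompact_Icc.exists_bound_of_continuousOn
    (hfI.continuousOn_iteratedDerivWithin (le_refl _) (uniqueDiffOn_Icc hbb))
  obtain ⟨Cg, hCg⟩ := isCompact_Icc.exists_bound_of_continuousOn
    (hgI.continuousOn_iteratedDerivWithin (le_refl _) (uniqueDiffOn_Icc hbb))
  set C : ℝ := max Cf Cg with hC
  have hC0 : 0 ≤ C := le_trans (norm_nonneg _) ((hCf b hbI).trans (le_max_left _ _))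
  have hCf' : ∀ y ∈ I, ‖iteratedDerivWithin (4 + 1) f I y‖ ≤ C :=
    fun y hy => (hCf y hy).trans (le_max_left _ _)
  have hCg' : ∀ y ∈ I, ‖iteratedDerivWithin (4 + 1) g I y‖ ≤ C :=
    fun y hy => (hCg y hy).trans (le_max_right _ _)
  -- iterated derivatives within I at b agree with global ones
  have hfd : ∀ k : ℕ, k ≤ 5 → iteratedDerivWithin k f I b = iteratedDeriv k f b := by
    intro k hk
    exact iterDW_eq_iterD hUo hIU (uniqueDiffOn_Icc hbb) k
      (hf.of_le (by exact_mod_cast hk)) b hbI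
  have hgd : ∀ k : ℕ, k ≤ 5 → iteratedDerivWithin k g I b = iteratedDeriv k g b := by
    intro k hk
    exact iterDW_eq_iterD hU'o hIU' (uniqueDiffOn_Icc hbb) k
      (hgU'.of_le (by exact_mod_cast hk)) b hbI
  -- reflected derivatives
  have hrefl : ∀ k : ℕ, iteratedDeriv k g b = (-1 : ℝ) ^ k * iteratedDeriv k f b := by
    intro k
    have h1 : g = fun x => f (-x + 2 * b) := by
      funext x; simp only [hg]; congr 1; ring
    have h2 : iteratedDeriv k (fun x : ℝ => f (-x + 2 * b)) b
        = (-1 : ℝ) ^ k • iteratedDeriv k (fun y => f (y + 2 * b)) (-b) :=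
      iteratedDeriv_comp_neg k (fun y => f (y + 2 * b)) b
    have h3 : iteratedDeriv k (fun y : ℝ => f (y + 2 * b)) (-b) = iteratedDeriv k f (-b + 2 * b) :=
      congrFun (iteratedDeriv_comp_add_const k f (2 * b)) (-b)
    have h4 : -b + 2 * b = b := by ring
    rw [h1, h2, h3, h4, smul_eq_mul]
  refine ⟨C / 24, by positivity, fun x hx => ?_⟩
  rcases le_total b x with hxb | hxb
  · -- right of b : direct Taylor
    have hxI : x ∈ I := ⟨hxb, hx.2⟩
    have := taylor_mean_remainder_bound (n := 4) hbb.le hfI hxI hCf'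
    rw [taylor_within_apply] at this
    simp only [Finset.sum_range_succ, Finset.sum_range_zero, smul_eq_mul] at this
    rw [hfd 0 (by norm_num), hfd 1 (by norm_num), hfd 2 (by norm_num), hfd 3 (by norm_num),
      hfd 4 (by norm_num)] at this
    have habs : |x - b| = x - b := abs_of_nonneg (by linarith)
    rw [Real.norm_eq_abs] at this
    calc |f x - _| = |f x - (0 + (↑(Nat.factorial 0) : ℝ)⁻¹ * (x - b) ^ 0 * iteratedDeriv 0 f b
          + (↑(Nat.factorial 1) : ℝ)⁻¹ * (x - b) ^ 1 * iteratedDeriv 1 f b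
          + (↑(Nat.factorial 2) : ℝ)⁻¹ * (x - b) ^ 2 * iteratedDeriv 2 f b
          + (↑(Nat.factorial 3) : ℝ)⁻¹ * (x - b) ^ 3 * iteratedDeriv 3 f b
          + (↑(Nat.factorial 4) : ℝ)⁻¹ * (x - b) ^ 4 * iteratedDeriv 4 f b)| := by
            norm_num [Nat.factorial]; ring_nf
      _ ≤ C * (x - b) ^ (4 + 1) / (Nat.factorial 4) := this
      _ = C / 24 * |x - b| ^ 5 := by rw [habs]; norm_num [Nat.factorial]; ring
  · -- left of b : reflected Taylor
    have hyI : 2 * b - x ∈ I := ⟨by linarith, by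
      have := hx.1; simp only [mem_Icc] at hx ⊢; linarith [hx.1]⟩
    have := taylor_mean_remainder_bound (n := 4) hbb.le hgI hyI hCg'
    rw [taylor_within_apply] at this
    simp only [Finset.sum_range_succ, Finset.sum_range_zero, smul_eq_mul] at this
    rw [hgd 0 (by norm_num), hgd 1 (by norm_num), hgd 2 (by norm_num), hgd 3 (by norm_num),
      hgd 4 (by norm_num), hrefl 0, hrefl 1, hrefl 2, hrefl 3, hrefl 4] at this
    have hgx : g (2 * b - x) = f x := by simp only [hg]; congr 1; ring
    rw [hgx, Real.norm_eq_abs] at this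
    have habs : |x - b| = b - x := by rw [abs_sub_comm]; exact abs_of_nonneg (by linarith)
    calc |f x - _| = |f x - (0 + (↑(Nat.factorial 0) : ℝ)⁻¹ * (2 * b - x - b) ^ 0 * ((-1:ℝ) ^ 0 * iteratedDeriv 0 f b)
          + (↑(Nat.factorial 1) : ℝ)⁻¹ * (2 * b - x - b) ^ 1 * ((-1:ℝ) ^ 1 * iteratedDeriv 1 f b)
          + (↑(Nat.factorial 2) : ℝ)⁻¹ * (2 * b - x - b) ^ 2 * ((-1:ℝ) ^ 2 * iteratedDeriv 2 f b)
          + (↑(Nat.factorial 3) : ℝ)⁻¹ * (2 * b - x - b) ^ 3 * ((-1:ℝ) ^ 3 * iteratedDeriv 3 f b)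
          + (↑(Nat.factorial 4) : ℝ)⁻¹ * (2 * b - x - b) ^ 4 * ((-1:ℝ) ^ 4 * iteratedDeriv 4 f b))| := by
            norm_num [Nat.factorial]; ring_nf
      _ ≤ C * (2 * b - x - b) ^ (4 + 1) / (Nat.factorial 4) := this
      _ = C / 24 * |x - b| ^ 5 := by rw [habs]; norm_num [Nat.factorial]; ring


set_option maxHeartbeats 2000000 in
/-- First fifth-order ghost-cell filling formula for Neumann boundary conditions:
`A₀ = (1/10)(5A₋₁ + 9A₋₂ − 5A₋₃ + A₋₄) + (6h/5) f'(b) + O(h⁵)`. -/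
theorem ghost_cell_neumann_first_fifth_order
    (b : ℝ) (f : ℝ → ℝ)
    (U : Set ℝ) (hU : IsOpen U) (hb : b ∈ U) (hf : ContDiffOn ℝ 5 f U) :
    ∃ M > 0, ∃ h₀ > 0, ∀ h : ℝ, 0 < h → h < h₀ →
      |cellAvg f b h 0 - ((1 / 10) * (5 * cellAvg f b h (-1) + 9 * cellAvg f b h (-2)
        - 5 * cellAvg f b h (-3) + cellAvg f b h (-4))
        + (6 * h / 5) * deriv f b)| ≤ M * h ^ 5 := by
  obtain ⟨ε, hε, hball⟩ : ∃ ε > 0, Icc (b - ε) (b + ε) ⊆ U := by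
    obtain ⟨ε, hε, hbe⟩ := Metric.isOpen_iff.mp hU b hb
    refine ⟨ε / 2, by linarith, fun x hx => hbe ?_⟩
    rw [Metric.mem_ball, Real.dist_eq]
    rcases hx with ⟨h1, h2⟩
    rw [abs_lt]; constructor <;> linarith
  obtain ⟨K, hK0, hKb⟩ := taylor_two_sided hU hε hball hf
  set d0 := iteratedDeriv 0 f b with hd0
  set d1 := iteratedDeriv 1 f b with hd1
  set d2 := iteratedDeriv 2 f b with hd2
  set d3 := iteratedDeriv 3 f b with hd3
  set d4 := iteratedDeriv 4 f b with hd4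
  set Qv : ℝ → ℝ := fun t => d0 * t + d1 / 2 * t ^ 2 + (d2 / 2) / 3 * t ^ 3
    + (d3 / 6) / 4 * t ^ 4 + (d4 / 24) / 5 * t ^ 5 with hQv
  refine ⟨3 * 1024 * K + 1, by linarith, ε / 4, by linarith, fun h hh hhε => ?_⟩
  have hp5 : (0 : ℝ) ≤ h ^ 5 := by positivity
  -- error bound per cell
  have herr : ∀ j : ℤ, -4 ≤ j → j ≤ 0 →
      |cellAvg f b h j - 1 / h * (Qv (((j : ℝ) + 1) * h) - Qv ((j : ℝ) * h))|
        ≤ 1024 * K * h ^ 5 := by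
    intro j hj1 hj2
    have hjr1 : (-4 : ℝ) ≤ (j : ℝ) := by exact_mod_cast hj1
    have hjr2 : (j : ℝ) ≤ 0 := by exact_mod_cast hj2
    have hja : b - ε ≤ b + (j : ℝ) * h := by nlinarith
    have hjc : b + ((j : ℝ) + 1) * h ≤ b + ε := by nlinarith
    have hac : b + (j : ℝ) * h ≤ b + ((j : ℝ) + 1) * h := by nlinarith
    have hsubcell : Icc (b + (j : ℝ) * h) (b + ((j : ℝ) + 1) * h) ⊆ Icc (b - ε) (b + ε) :=
      Icc_subset_Icc hja hjc
    have hfint : IntervalIntegrable f MeasureTheory.volume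
        (b + (j : ℝ) * h) (b + ((j : ℝ) + 1) * h) := by
      apply ContinuousOn.intervalIntegrable
      rw [uIcc_of_le hac]
      exact hf.continuousOn.mono (hsubcell.trans hball)
    have hpint : IntervalIntegrable
        (fun x => d0 + d1 * (x - b) + d2 / 2 * (x - b) ^ 2 + d3 / 6 * (x - b) ^ 3
          + d4 / 24 * (x - b) ^ 4) MeasureTheory.volume
        (b + (j : ℝ) * h) (b + ((j : ℝ) + 1) * h) :=
      Continuous.intervalIntegrable (by fun_prop) _ _
    have hsplit : (∫ x in (b + (j : ℝ) * h)..(b + ((j : ℝ) + 1) * h), f x)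
        = (∫ x in (b + (j : ℝ) * h)..(b + ((j : ℝ) + 1) * h),
            (f x - (d0 + d1 * (x - b) + d2 / 2 * (x - b) ^ 2 + d3 / 6 * (x - b) ^ 3
              + d4 / 24 * (x - b) ^ 4)))
          + (Qv (((j : ℝ) + 1) * h) - Qv ((j : ℝ) * h)) := by
      rw [intervalIntegral.integral_sub hfint hpint, integral_cell d0 d1 (d2/2) (d3/6) (d4/24) b]
      simp only [hQv]
      ring
    rw [cellAvg, hsplit]
    have heq : 1 / h * ((∫ x in (b + (j : ℝ) * h)..(b + ((j : ℝ) + 1) * h),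
          (f x - (d0 + d1 * (x - b) + d2 / 2 * (x - b) ^ 2 + d3 / 6 * (x - b) ^ 3
            + d4 / 24 * (x - b) ^ 4)))
          + (Qv (((j : ℝ) + 1) * h) - Qv ((j : ℝ) * h)))
        - 1 / h * (Qv (((j : ℝ) + 1) * h) - Qv ((j : ℝ) * h))
        = 1 / h * (∫ x in (b + (j : ℝ) * h)..(b + ((j : ℝ) + 1) * h),
            (f x - (d0 + d1 * (x - b) + d2 / 2 * (x - b) ^ 2 + d3 / 6 * (x - b) ^ 3
              + d4 / 24 * (x - b) ^ 4))) := by ring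
    rw [heq, abs_mul, abs_of_pos (by positivity : (0:ℝ) < 1 / h)]
    have hbound : ‖∫ x in (b + (j : ℝ) * h)..(b + ((j : ℝ) + 1) * h),
        (f x - (d0 + d1 * (x - b) + d2 / 2 * (x - b) ^ 2 + d3 / 6 * (x - b) ^ 3
          + d4 / 24 * (x - b) ^ 4))‖
        ≤ (K * (4 * h) ^ 5) * |(b + ((j : ℝ) + 1) * h) - (b + (j : ℝ) * h)| := by
      apply intervalIntegral.norm_integral_le_of_norm_le_const
      intro x hx
      rw [uIoc_of_le hac] at hx
      have hxm : x ∈ Icc (b - ε) (b + ε) := hsubcell ⟨hx.1.le, hx.2⟩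
      have hxb : |x - b| ≤ 4 * h := by
        rw [abs_le]
        rcases hx with ⟨hx1, hx2⟩
        constructor <;> nlinarith
      calc ‖f x - (d0 + d1 * (x - b) + d2 / 2 * (x - b) ^ 2 + d3 / 6 * (x - b) ^ 3
            + d4 / 24 * (x - b) ^ 4)‖ ≤ K * |x - b| ^ 5 := hKb x hxm
        _ ≤ K * (4 * h) ^ 5 := by
            apply mul_le_mul_of_nonneg_left _ hK0
            exact pow_le_pow_left₀ (abs_nonneg _) hxb 5
    rw [Real.norm_eq_abs] at hbound
    have habs : |(b + ((j : ℝ) + 1) * h) - (b + (j : ℝ) * h)| = h := by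
      rw [show (b + ((j : ℝ) + 1) * h) - (b + (j : ℝ) * h) = h by ring]
      exact abs_of_pos hh
    rw [habs] at hbound
    calc 1 / h * |∫ x in (b + (j : ℝ) * h)..(b + ((j : ℝ) + 1) * h),
          (f x - (d0 + d1 * (x - b) + d2 / 2 * (x - b) ^ 2 + d3 / 6 * (x - b) ^ 3
            + d4 / 24 * (x - b) ^ 4))| ≤ 1 / h * (K * (4 * h) ^ 5 * h) := by
          apply mul_le_mul_of_nonneg_left hbound (by positivity)
      _ = 1024 * K * h ^ 5 := by field_simp; ring
  have e0 := herr 0 (by norm_num) (by norm_num)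
  have e1 := herr (-1) (by norm_num) (by norm_num)
  have e2 := herr (-2) (by norm_num) (by norm_num)
  have e3 := herr (-3) (by norm_num) (by norm_num)
  have e4 := herr (-4) (by norm_num) (by norm_num)
  have hid : 1 / h * (Qv ((((0 : ℤ) : ℝ) + 1) * h) - Qv (((0 : ℤ) : ℝ) * h))
      - (1 / 10) * (5 * (1 / h * (Qv ((((-1 : ℤ) : ℝ) + 1) * h) - Qv (((-1 : ℤ) : ℝ) * h)))
        + 9 * (1 / h * (Qv ((((-2 : ℤ) : ℝ) + 1) * h) - Qv (((-2 : ℤ) : ℝ) * h)))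
        - 5 * (1 / h * (Qv ((((-3 : ℤ) : ℝ) + 1) * h) - Qv (((-3 : ℤ) : ℝ) * h)))
        + 1 / h * (Qv ((((-4 : ℤ) : ℝ) + 1) * h) - Qv (((-4 : ℤ) : ℝ) * h)))
      = 6 * h / 5 * d1 := by
    simp only [hQv]
    push_cast
    field_simp
    ring
  have hder : deriv f b = d1 := by rw [hd1, iteratedDeriv_one]
  rw [hder]
  have key : cellAvg f b h 0 - ((1 / 10) * (5 * cellAvg f b h (-1) + 9 * cellAvg f b h (-2)
        - 5 * cellAvg f b h (-3) + cellAvg f b h (-4)) + 6 * h / 5 * d1)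
      = (cellAvg f b h 0 - 1 / h * (Qv ((((0 : ℤ) : ℝ) + 1) * h) - Qv (((0 : ℤ) : ℝ) * h)))
        - (1 / 10) * (5 * (cellAvg f b h (-1)
            - 1 / h * (Qv ((((-1 : ℤ) : ℝ) + 1) * h) - Qv (((-1 : ℤ) : ℝ) * h)))
          + 9 * (cellAvg f b h (-2)
            - 1 / h * (Qv ((((-2 : ℤ) : ℝ) + 1) * h) - Qv (((-2 : ℤ) : ℝ) * h)))
          - 5 * (cellAvg f b h (-3)
            - 1 / h * (Qv ((((-3 : ℤ) : ℝ) + 1) * h) - Qv (((-3 : ℤ) : ℝ) * h)))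
          + (cellAvg f b h (-4)
            - 1 / h * (Qv ((((-4 : ℤ) : ℝ) + 1) * h) - Qv (((-4 : ℤ) : ℝ) * h)))) := by
    linear_combination -hid + (12/5) * d1 * h * (mul_inv_cancel₀ (ne_of_gt hh))
  rw [key]
  rw [abs_le] at e0 e1 e2 e3 e4 ⊢
  constructor <;> [skip; skip] <;>
    [ (obtain ⟨a0, b0⟩ := e0; obtain ⟨a1, b1⟩ := e1; obtain ⟨a2, b2⟩ := e2;
       obtain ⟨a3, b3⟩ := e3; obtain ⟨a4, b4⟩ := e4; nlinarith);
      (obtain ⟨a0, b0⟩ := e0; obtain ⟨a1, b1⟩ := e1; obtain ⟨a2, b2⟩ := e2;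
       obtain ⟨a3, b3⟩ := e3; obtain ⟨a4, b4⟩ := e4; nlinarith)]
end

section
/- Fix b ∈ ℝ and let f : ℝ → ℝ be of class C⁵ on an open neighborhood of the point b. Then, with A_j := (1/h) ∫_{b+jh}^{b+(j+1)h} f(x) dx, the second ghost-cell average satisfies A₁ = (1/10)·(−75A₋₁ + 145A₋₂ − 75A₋₃ + 15A₋₄) + 6h·f'(b) + O(h⁵) as h → 0⁺. -/
open Set MeasureTheory intervalIntegral

/-- If `F b = 0`, `F' = G` on a closed ball around `b`, and `|G t| ≤ C |t-b|^m` there,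
then `|F x| ≤ C |x-b|^(m+1)` on the ball. -/
lemma ghost_lemA {F G : ℝ → ℝ} {b ε C : ℝ} {m : ℕ} (hC : 0 ≤ C)
    (hF : ∀ t ∈ Metric.closedBall b ε, HasDerivAt F (G t) t)
    (hFb : F b = 0)
    (hG : ContinuousOn G (Metric.closedBall b ε))
    (hGb : ∀ t ∈ Metric.closedBall b ε, |G t| ≤ C * |t - b| ^ m) :
    ∀ x ∈ Metric.closedBall b ε, |F x| ≤ C * |x - b| ^ (m + 1) := by
  intro x hx
  have hε : 0 ≤ ε := le_trans dist_nonneg hx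
  have hbmem : b ∈ Metric.closedBall b ε := Metric.mem_closedBall_self hε
  have hsub : Set.uIcc b x ⊆ Metric.closedBall b ε := by
    rw [Real.closedBall_eq_Icc] at hbmem hx ⊢
    exact Set.ordConnected_Icc.uIcc_subset hbmem hx
  have hint : IntervalIntegrable G MeasureTheory.volume b x :=
    (hG.mono hsub).intervalIntegrable
  have hFTC : ∫ t in b..x, G t = F x - F b :=
    intervalIntegral.integral_eq_sub_of_hasDerivAt (fun t ht => hF t (hsub ht)) hint
  have hbound : ∀ t ∈ Set.uIoc b x, ‖G t‖ ≤ C * |x - b| ^ m := by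
    intro t ht
    have h1 : |t - b| ≤ |x - b| := by
      rcases Set.mem_uIoc.mp ht with ⟨h1, h2⟩ | ⟨h1, h2⟩
      · rw [abs_of_pos (by linarith), abs_of_nonneg (by linarith)]; linarith
      · rw [abs_of_nonpos (by linarith), abs_of_nonpos (by linarith)]; linarith
    have h2 : |G t| ≤ C * |t - b| ^ m := hGb t (hsub (Set.uIoc_subset_uIcc ht))
    calc ‖G t‖ = |G t| := rfl
      _ ≤ C * |t - b| ^ m := h2
      _ ≤ C * |x - b| ^ m := by gcongr
  have hn := intervalIntegral.norm_integral_le_of_norm_le_const hbound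
  rw [hFTC, hFb, sub_zero] at hn
  calc |F x| ≤ C * |x - b| ^ m * |x - b| := hn
    _ = C * |x - b| ^ (m + 1) := by ring

/-- Bound on the cell-average error coming from a pointwise fifth-order bound. -/
lemma ghost_cell_err {f P : ℝ → ℝ} {b ε C h : ℝ} (j : ℤ) (hj : |(j : ℝ)| ≤ 4)
    (hj1 : |(j : ℝ) + 1| ≤ 4)
    (hh : 0 < h) (h4 : 4 * h ≤ ε)
    (hf : ContinuousOn f (Metric.closedBall b ε)) (hP : Continuous P) (hC : 0 ≤ C)
    (hbd : ∀ x ∈ Metric.closedBall b ε, |f x - P x| ≤ C * |x - b| ^ 5) :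
    |cellAvg f b h j - cellAvg P b h j| ≤ 1024 * C * h ^ 5 := by
  set a₁ := b + (j : ℝ) * h with ha₁def
  set a₂ := b + ((j : ℝ) + 1) * h with ha₂def
  have hd1 : |a₁ - b| ≤ 4 * h := by
    have : a₁ - b = (j : ℝ) * h := by rw [ha₁def]; ring
    rw [this, abs_mul, abs_of_pos hh]
    nlinarith [abs_nonneg ((j : ℝ))]
  have hd2 : |a₂ - b| ≤ 4 * h := by
    have : a₂ - b = ((j : ℝ) + 1) * h := by rw [ha₂def]; ring
    rw [this, abs_mul, abs_of_pos hh]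
    nlinarith [abs_nonneg ((j : ℝ) + 1)]
  have ha₁ : a₁ ∈ Metric.closedBall b ε := by
    rw [Metric.mem_closedBall, Real.dist_eq]; linarith
  have ha₂ : a₂ ∈ Metric.closedBall b ε := by
    rw [Metric.mem_closedBall, Real.dist_eq]; linarith
  have hsub : Set.uIcc a₁ a₂ ⊆ Metric.closedBall b ε := by
    rw [Real.closedBall_eq_Icc] at ha₁ ha₂ ⊢
    exact Set.ordConnected_Icc.uIcc_subset ha₁ ha₂
  have hint_f : IntervalIntegrable f MeasureTheory.volume a₁ a₂ :=
    ((hf.mono hsub)).intervalIntegrable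
  have hint_P : IntervalIntegrable P MeasureTheory.volume a₁ a₂ :=
    hP.intervalIntegrable _ _
  have heq : cellAvg f b h j - cellAvg P b h j = (1 / h) * ∫ x in a₁..a₂, (f x - P x) := by
    rw [cellAvg, cellAvg, intervalIntegral.integral_sub hint_f hint_P]; ring
  rw [heq]
  have hbound : ∀ t ∈ Set.uIoc a₁ a₂, ‖f t - P t‖ ≤ C * (4 * h) ^ 5 := by
    intro t ht
    have htm : t ∈ Set.uIcc a₁ a₂ := Set.uIoc_subset_uIcc ht
    have h1 : |t - b| ≤ 4 * h := by
      rw [Set.mem_uIcc] at htm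
      rw [abs_le] at hd1 hd2 ⊢
      rcases htm with ⟨hl, hr⟩ | ⟨hl, hr⟩ <;> constructor <;> linarith [hd1.1, hd1.2, hd2.1, hd2.2]
    calc ‖f t - P t‖ = |f t - P t| := rfl
      _ ≤ C * |t - b| ^ 5 := hbd t (hsub htm)
      _ ≤ C * (4 * h) ^ 5 := by gcongr
  have hn := intervalIntegral.norm_integral_le_of_norm_le_const hbound
  have ha : |a₂ - a₁| = h := by
    have : a₂ - a₁ = h := by rw [ha₁def, ha₂def]; ring
    rw [this, abs_of_pos hh]
  rw [ha] at hn
  calc |(1 / h) * ∫ x in a₁..a₂, (f x - P x)| = (1 / h) * |∫ x in a₁..a₂, (f x - P x)| := by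
        rw [abs_mul, abs_of_pos (by positivity)]
    _ ≤ (1 / h) * (C * (4 * h) ^ 5 * h) := mul_le_mul_of_nonneg_left hn (by positivity)
    _ = 1024 * C * h ^ 5 := by field_simp; ring

/-- The degree-4 Taylor-type polynomial. -/
noncomputable def taylorP (b c0 c1 c2 c3 c4 : ℝ) : ℝ → ℝ := fun x =>
  c0 + c1 * (x - b) + c2 / 2 * (x - b) ^ 2 + c3 / 6 * (x - b) ^ 3 + c4 / 24 * (x - b) ^ 4

lemma taylorP_cont (b c0 c1 c2 c3 c4 : ℝ) : Continuous (taylorP b c0 c1 c2 c3 c4) := by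
  unfold taylorP; fun_prop

lemma cellAvg_taylorP (b h c0 c1 c2 c3 c4 : ℝ) (j : ℤ) :
    cellAvg (taylorP b c0 c1 c2 c3 c4) b h j = (1 / h) *
      ((c0 * (((j : ℝ) + 1) * h) + c1 / 2 * (((j : ℝ) + 1) * h) ^ 2 + c2 / 6 * (((j : ℝ) + 1) * h) ^ 3
        + c3 / 24 * (((j : ℝ) + 1) * h) ^ 4 + c4 / 120 * (((j : ℝ) + 1) * h) ^ 5)
      - (c0 * ((j : ℝ) * h) + c1 / 2 * ((j : ℝ) * h) ^ 2 + c2 / 6 * ((j : ℝ) * h) ^ 3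
        + c3 / 24 * ((j : ℝ) * h) ^ 4 + c4 / 120 * ((j : ℝ) * h) ^ 5)) := by
  have hQ : ∀ x : ℝ, HasDerivAt (fun y : ℝ => c0 * (y - b) + c1 / 2 * (y - b) ^ 2
      + c2 / 6 * (y - b) ^ 3 + c3 / 24 * (y - b) ^ 4 + c4 / 120 * (y - b) ^ 5)
      (taylorP b c0 c1 c2 c3 c4 x) x := by
    intro x
    have hid : HasDerivAt (fun y : ℝ => y - b) 1 x := (hasDerivAt_id x).sub_const b
    have H := ((((hid.const_mul c0).add ((hid.pow 2).const_mul (c1 / 2))).add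
      ((hid.pow 3).const_mul (c2 / 6))).add ((hid.pow 4).const_mul (c3 / 24))).add
      ((hid.pow 5).const_mul (c4 / 120))
    refine H.congr_deriv ?_
    unfold taylorP
    push_cast
    norm_num
    ring
  rw [cellAvg]
  congr 1
  rw [intervalIntegral.integral_eq_sub_of_hasDerivAt (fun t _ => hQ t)
    ((taylorP_cont b c0 c1 c2 c3 c4).intervalIntegrable _ _)]
  have e1 : b + ((j : ℝ) + 1) * h - b = ((j : ℝ) + 1) * h := by ring
  have e2 : b + (j : ℝ) * h - b = (j : ℝ) * h := by ring
  simp only [e1, e2]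

/-- Exact ghost-cell identity for degree-4 Taylor polynomials. -/
lemma ghost_poly_id (b h c0 c1 c2 c3 c4 : ℝ) (hh : h ≠ 0) :
    cellAvg (taylorP b c0 c1 c2 c3 c4) b h 1 =
      (1 / 10) * (-75 * cellAvg (taylorP b c0 c1 c2 c3 c4) b h (-1)
        + 145 * cellAvg (taylorP b c0 c1 c2 c3 c4) b h (-2)
        - 75 * cellAvg (taylorP b c0 c1 c2 c3 c4) b h (-3)
        + 15 * cellAvg (taylorP b c0 c1 c2 c3 c4) b h (-4)) + 6 * h * c1 := by
  rw [cellAvg_taylorP, cellAvg_taylorP, cellAvg_taylorP, cellAvg_taylorP, cellAvg_taylorP]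
  push_cast
  field_simp
  ring

set_option maxHeartbeats 1000000 in
/-- Second fifth-order ghost-cell filling formula for Neumann boundary conditions:
`A₁ = (1/10)(−75A₋₁ + 145A₋₂ − 75A₋₃ + 15A₋₄) + 6h f'(b) + O(h⁵)`. -/
theorem ghost_cell_neumann_second_fifth_order
    (b : ℝ) (f : ℝ → ℝ)
    (U : Set ℝ) (hU : IsOpen U) (hb : b ∈ U) (hf : ContDiffOn ℝ 5 f U) :
    ∃ M > 0, ∃ h₀ > 0, ∀ h : ℝ, 0 < h → h < h₀ →
      |cellAvg f b h 1 - ((1 / 10) * (-75 * cellAvg f b h (-1) + 145 * cellAvg f b h (-2)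
        - 75 * cellAvg f b h (-3) + 15 * cellAvg f b h (-4))
        + 6 * h * deriv f b)| ≤ M * h ^ 5 := by
  have hUD : UniqueDiffOn ℝ U := hU.uniqueDiffOn
  have hEq : ∀ k : ℕ, Set.EqOn (iteratedDerivWithin k f U) (iteratedDeriv k f) U := by
    intro k x hx
    rw [iteratedDerivWithin_eq_iteratedFDerivWithin, iteratedDeriv_eq_iteratedFDeriv,
      iteratedFDerivWithin_of_isOpen k hU hx]
  have hdiff : ∀ k : ℕ, k < 5 → ∀ x ∈ U, DifferentiableAt ℝ (iteratedDeriv k f) x := by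
    intro k hk x hx
    have h1 : DifferentiableWithinAt ℝ (iteratedDerivWithin k f U) U x :=
      hf.differentiableOn_iteratedDerivWithin (by exact_mod_cast hk) hUD x hx
    have h2 : DifferentiableAt ℝ (iteratedDerivWithin k f U) x :=
      h1.differentiableAt (hU.mem_nhds hx)
    exact h2.congr_of_eventuallyEq (Filter.eventuallyEq_of_mem (hU.mem_nhds hx) (hEq k)).symm
  have hD : ∀ k : ℕ, k < 5 → ∀ x ∈ U, HasDerivAt (iteratedDeriv k f)
      (iteratedDeriv (k + 1) f x) x := by
    intro k hk x hx
    rw [iteratedDeriv_succ]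
    exact (hdiff k hk x hx).hasDerivAt
  have hc5U : ContinuousOn (iteratedDeriv 5 f) U :=
    (hf.continuousOn_iteratedDerivWithin (by exact_mod_cast le_rfl) hUD).congr (hEq 5).symm
  obtain ⟨ε₀, hε₀, hball⟩ := Metric.isOpen_iff.mp hU b hb
  set ε := ε₀ / 2 with hεdef
  have hε : 0 < ε := by positivity
  have hsubU : Metric.closedBall b ε ⊆ U :=
    (Metric.closedBall_subset_ball (by rw [hεdef]; linarith)).trans hball
  obtain ⟨C, hC⟩ := (isCompact_closedBall b ε).exists_bound_of_continuousOn (hc5U.mono hsubU)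
  have hC0 : 0 ≤ C := le_trans (norm_nonneg _) (hC b (Metric.mem_closedBall_self hε.le))
  have hCabs : ∀ t ∈ Metric.closedBall b ε, |iteratedDeriv 5 f t| ≤ C := hC
  -- derivative facts specialized
  have hD0 : ∀ x ∈ U, HasDerivAt f (deriv f x) x := by
    intro x hx
    have := hD 0 (by norm_num) x hx
    rwa [iteratedDeriv_zero, iteratedDeriv_one] at this
  have hD1 : ∀ x ∈ U, HasDerivAt (deriv f) (iteratedDeriv 2 f x) x := by
    intro x hx
    have := hD 1 (by norm_num) x hx
    rwa [iteratedDeriv_one] at this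
  have hD2 : ∀ x ∈ U, HasDerivAt (iteratedDeriv 2 f) (iteratedDeriv 3 f x) x :=
    fun x hx => hD 2 (by norm_num) x hx
  have hD3 : ∀ x ∈ U, HasDerivAt (iteratedDeriv 3 f) (iteratedDeriv 4 f x) x :=
    fun x hx => hD 3 (by norm_num) x hx
  have hD4 : ∀ x ∈ U, HasDerivAt (iteratedDeriv 4 f) (iteratedDeriv 5 f x) x :=
    fun x hx => hD 4 (by norm_num) x hx
  -- continuity on the closed ball
  have hcont : ∀ k : ℕ, k < 5 → ContinuousOn (iteratedDeriv k f) (Metric.closedBall b ε) :=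
    fun k hk x hx => ((hdiff k hk x (hsubU hx)).continuousAt).continuousWithinAt
  have hcf : ContinuousOn f (Metric.closedBall b ε) := by
    have := hcont 0 (by norm_num); rwa [iteratedDeriv_zero] at this
  have hc1 : ContinuousOn (deriv f) (Metric.closedBall b ε) := by
    have := hcont 1 (by norm_num); rwa [iteratedDeriv_one] at this
  have hc2 : ContinuousOn (iteratedDeriv 2 f) (Metric.closedBall b ε) := hcont 2 (by norm_num)
  have hc3 : ContinuousOn (iteratedDeriv 3 f) (Metric.closedBall b ε) := hcont 3 (by norm_num)
  have hc4 : ContinuousOn (iteratedDeriv 4 f) (Metric.closedBall b ε) := hcont 4 (by norm_num)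
  have hc5 : ContinuousOn (iteratedDeriv 5 f) (Metric.closedBall b ε) := hc5U.mono hsubU
  -- Taylor coefficients
  set c0 := f b with hc0def
  set c1 := deriv f b with hc1def
  set c2 := iteratedDeriv 2 f b with hc2def
  set c3 := iteratedDeriv 3 f b with hc3def
  set c4 := iteratedDeriv 4 f b with hc4def
  -- remainder chain
  have hB4 : ∀ x ∈ Metric.closedBall b ε, |iteratedDeriv 4 f x - c4| ≤ C * |x - b| ^ 1 := by
    refine ghost_lemA hC0 (fun t ht => (hD4 t (hsubU ht)).sub_const c4) (by simp [hc4def]) hc5 ?_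
    intro t ht
    simpa using hCabs t ht
  have hB3 : ∀ x ∈ Metric.closedBall b ε,
      |iteratedDeriv 3 f x - c3 - c4 * (x - b)| ≤ C * |x - b| ^ 2 := by
    refine ghost_lemA hC0 (fun t ht => ?_) (by simp [hc3def])
      ((hc4.sub continuousOn_const)) hB4
    have h1 := ((hD3 t (hsubU ht)).sub_const c3).sub
      (((hasDerivAt_id t).sub_const b).const_mul c4)
    refine h1.congr_deriv ?_
    simp only [hc0def, hc1def, hc2def, hc3def, hc4def]
    norm_num
  have hB2 : ∀ x ∈ Metric.closedBall b ε,
      |iteratedDeriv 2 f x - c2 - c3 * (x - b) - c4 / 2 * (x - b) ^ 2| ≤ C * |x - b| ^ 3 := by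
    refine ghost_lemA hC0 (fun t ht => ?_) (by simp [hc2def])
      (((hc3.sub continuousOn_const).sub (by fun_prop))) hB3
    have hid : HasDerivAt (fun y : ℝ => y - b) 1 t := (hasDerivAt_id t).sub_const b
    have h1 := (((hD2 t (hsubU ht)).sub_const c2).sub (hid.const_mul c3)).sub
      ((hid.pow 2).const_mul (c4 / 2))
    refine h1.congr_deriv ?_
    simp only [hc0def, hc1def, hc2def, hc3def, hc4def]
    push_cast
    norm_num
    ring
  have hB1 : ∀ x ∈ Metric.closedBall b ε,
      |deriv f x - c1 - c2 * (x - b) - c3 / 2 * (x - b) ^ 2 - c4 / 6 * (x - b) ^ 3|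
        ≤ C * |x - b| ^ 4 := by
    refine ghost_lemA hC0 (fun t ht => ?_) (by simp [hc1def])
      ((((hc2.sub continuousOn_const).sub (by fun_prop)).sub (by fun_prop))) hB2
    have hid : HasDerivAt (fun y : ℝ => y - b) 1 t := (hasDerivAt_id t).sub_const b
    have h1 := ((((hD1 t (hsubU ht)).sub_const c1).sub (hid.const_mul c2)).sub
      ((hid.pow 2).const_mul (c3 / 2))).sub ((hid.pow 3).const_mul (c4 / 6))
    refine h1.congr_deriv ?_
    simp only [hc0def, hc1def, hc2def, hc3def, hc4def]
    push_cast
    norm_num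
    ring
  have hTB : ∀ x ∈ Metric.closedBall b ε,
      |f x - taylorP b c0 c1 c2 c3 c4 x| ≤ C * |x - b| ^ 5 := by
    refine ghost_lemA hC0 (fun t ht => ?_) (by simp [taylorP, hc0def])
      (((((hc1.sub continuousOn_const).sub (by fun_prop)).sub (by fun_prop)).sub (by fun_prop)))
      hB1
    have hid : HasDerivAt (fun y : ℝ => y - b) 1 t := (hasDerivAt_id t).sub_const b
    have h1 := (hD0 t (hsubU ht)).sub (((((hasDerivAt_const t c0).add
      (hid.const_mul c1)).add ((hid.pow 2).const_mul (c2 / 2))).add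
      ((hid.pow 3).const_mul (c3 / 6))).add ((hid.pow 4).const_mul (c4 / 24)))
    refine h1.congr_deriv ?_
    simp only [hc0def, hc1def, hc2def, hc3def, hc4def]
    push_cast
    norm_num
    ring
  -- final assembly
  refine ⟨32768 * C + 1, by positivity, ε / 4, by positivity, ?_⟩
  intro h hh hh0
  have h4 : 4 * h ≤ ε := by linarith
  have hPc : Continuous (taylorP b c0 c1 c2 c3 c4) := taylorP_cont b c0 c1 c2 c3 c4
  have E1 := ghost_cell_err (f := f) (P := taylorP b c0 c1 c2 c3 c4) 1
    (by norm_num) (by norm_num) hh h4 hcf hPc hC0 hTB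
  have Em1 := ghost_cell_err (f := f) (P := taylorP b c0 c1 c2 c3 c4) (-1)
    (by norm_num) (by norm_num) hh h4 hcf hPc hC0 hTB
  have Em2 := ghost_cell_err (f := f) (P := taylorP b c0 c1 c2 c3 c4) (-2)
    (by norm_num) (by norm_num) hh h4 hcf hPc hC0 hTB
  have Em3 := ghost_cell_err (f := f) (P := taylorP b c0 c1 c2 c3 c4) (-3)
    (by norm_num) (by norm_num) hh h4 hcf hPc hC0 hTB
  have Em4 := ghost_cell_err (f := f) (P := taylorP b c0 c1 c2 c3 c4) (-4)
    (by norm_num) (by norm_num) hh h4 hcf hPc hC0 hTB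
  have hid := ghost_poly_id b h c0 c1 c2 c3 c4 (ne_of_gt hh)
  have hX : cellAvg f b h 1 - ((1 / 10) * (-75 * cellAvg f b h (-1) + 145 * cellAvg f b h (-2)
        - 75 * cellAvg f b h (-3) + 15 * cellAvg f b h (-4)) + 6 * h * c1)
      = (cellAvg f b h 1 - cellAvg (taylorP b c0 c1 c2 c3 c4) b h 1)
        - (1 / 10) * (-75 * (cellAvg f b h (-1) - cellAvg (taylorP b c0 c1 c2 c3 c4) b h (-1))
          + 145 * (cellAvg f b h (-2) - cellAvg (taylorP b c0 c1 c2 c3 c4) b h (-2))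
          - 75 * (cellAvg f b h (-3) - cellAvg (taylorP b c0 c1 c2 c3 c4) b h (-3))
          + 15 * (cellAvg f b h (-4) - cellAvg (taylorP b c0 c1 c2 c3 c4) b h (-4))) := by
    linear_combination hid
  rw [hX]
  have hp : (0 : ℝ) < h ^ 5 := by positivity
  have b1 := abs_le.mp E1
  have b2 := abs_le.mp Em1
  have b3 := abs_le.mp Em2
  have b4 := abs_le.mp Em3
  have b5 := abs_le.mp Em4
  rw [abs_le]
  constructor <;> linarith [b1.1, b1.2, b2.1, b2.2, b3.1, b3.2, b4.1, b4.2, b5.1, b5.2]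
end

section
/- Fix b ∈ ℝ and let f : ℝ → ℝ be of class C⁵ on an open neighborhood of the point b. Then, with A_j := (1/h) ∫_{b+jh}^{b+(j+1)h} f(x) dx, one has f'(b) = (1/(72h))·(−415A₋₁ + 161A₋₂ − 55A₋₃ + 9A₋₄) + (25/(6h))·f(b) + O(h⁴) as h → 0⁺. -/
open Set MeasureTheory intervalIntegral

set_option maxHeartbeats 8000000 in
/-- Fourth-order formula for the boundary normal derivative from a Dirichlet boundary
value and four interior cell averages:
`f'(b) = (1/(72h))(−415A₋₁ + 161A₋₂ − 55A₋₃ + 9A₋₄) + (25/(6h)) f(b) + O(h⁴)`. -/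
theorem boundary_derivative_from_dirichlet_and_cell_averages
    (b : ℝ) (f : ℝ → ℝ)
    (U : Set ℝ) (hU : IsOpen U) (hb : b ∈ U) (hf : ContDiffOn ℝ 5 f U) :
    ∃ M > 0, ∃ h₀ > 0, ∀ h : ℝ, 0 < h → h < h₀ →
      |deriv f b - ((1 / (72 * h)) * (-415 * cellAvg f b h (-1) + 161 * cellAvg f b h (-2)
        - 55 * cellAvg f b h (-3) + 9 * cellAvg f b h (-4))
        + (25 / (6 * h)) * f b)| ≤ M * h ^ 4 := by
  -- choose ε with Icc (b-ε) (b+ε) ⊆ U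
  obtain ⟨δ, hδ, hball⟩ := Metric.isOpen_iff.mp hU b hb
  set ε := δ / 2 with hεdef
  have hε : 0 < ε := by positivity
  have hsub : Icc (b - ε) (b + ε) ⊆ U := by
    intro x hx
    apply hball
    rw [Metric.mem_ball, Real.dist_eq]
    have h1 := hx.1; have h2 := hx.2
    rw [abs_lt]; constructor <;> [linarith; linarith]
  have hbε : b < b + ε := by linarith
  set s := Icc b (b + ε) with hsdef
  set g : ℝ → ℝ := fun x => f (2 * b - x) with hgdef
  have hmap : ∀ x ∈ s, 2 * b - x ∈ U := by
    intro x hx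
    exact hsub ⟨by linarith [hx.2], by linarith [hx.1]⟩
  have hg : ContDiffOn ℝ 5 g s := by
    apply hf.comp
    · exact (contDiff_const.sub contDiff_id).contDiffOn
    · intro x hx; exact hmap x hx
  have huds : UniqueDiffOn ℝ s := uniqueDiffOn_Icc hbε
  -- bound on 5th derivative
  obtain ⟨C0, hC0⟩ := isCompact_Icc.exists_bound_of_continuousOn
    (hg.continuousOn_iteratedDerivWithin (m := 5) (by norm_num) huds)
  set C := max C0 0 with hCdef
  have hCnn : 0 ≤ C := le_max_right _ _
  have hC : ∀ x ∈ s, ‖iteratedDerivWithin 5 g s x‖ ≤ C := fun x hx =>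
    (hC0 x hx).trans (le_max_left _ _)
  -- Taylor bound for g on s, centered at b
  have htay : ∀ x ∈ s, |g x - taylorWithinEval g 4 s b x| ≤ C * (x - b) ^ 5 / 24 := by
    intro x hx
    have hg' : ContDiffOn ℝ ((4 : ℕ) + 1) g s := by exact_mod_cast hg
    have := taylor_mean_remainder_bound (n := 4) hbε.le hg' hx (fun y hy => hC y hy)
    simpa [Real.norm_eq_abs, Nat.factorial] using this
  -- abbreviations for Taylor coefficients
  set d : ℕ → ℝ := fun k => iteratedDerivWithin k g s b with hddef
  have hT : ∀ x : ℝ, taylorWithinEval g 4 s b x =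
      d 0 + (x - b) * d 1 + (x - b) ^ 2 / 2 * d 2 + (x - b) ^ 3 / 6 * d 3
        + (x - b) ^ 4 / 24 * d 4 := by
    intro x
    rw [taylor_within_apply]
    simp [Finset.sum_range_succ, Nat.factorial, hddef]
    ring
  have hd0 : d 0 = f b := by
    simp only [hddef, iteratedDerivWithin_zero, hgdef]
    congr 1; ring
  have hfd : DifferentiableAt ℝ f b :=
    (hf.contDiffAt (hU.mem_nhds hb)).differentiableAt (by norm_num)
  have hd1 : d 1 = -deriv f b := by
    have h1 : HasDerivAt (fun x : ℝ => 2 * b - x) (-1) b := by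
      exact (hasDerivAt_id' b).const_sub (2 * b)
    have h2 : HasDerivAt f (deriv f b) (2 * b - b) := by
      rw [show 2 * b - b = b by ring]; exact hfd.hasDerivAt
    have hgd : HasDerivAt g (-deriv f b) b := by
      have := h2.comp b h1; rw [mul_neg_one] at this; exact this
    have : d 1 = derivWithin g s b := by
      simp only [hddef]
      exact iteratedDerivWithin_one (f := g) (s := s) ▸ rfl
    rw [this, hgd.differentiableAt.derivWithin (huds b (left_mem_Icc.mpr hbε.le))]
    exact hgd.deriv
  -- the Taylor polynomial in terms of y (reflected) and its antiderivative
  set Q : ℝ → ℝ := fun y => d 0 + (b - y) * d 1 + (b - y) ^ 2 / 2 * d 2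
    + (b - y) ^ 3 / 6 * d 3 + (b - y) ^ 4 / 24 * d 4 with hQdef
  set P : ℝ → ℝ := fun y => d 0 * y - (b - y) ^ 2 / 2 * d 1 - (b - y) ^ 3 / 6 * d 2
    - (b - y) ^ 4 / 24 * d 3 - (b - y) ^ 5 / 120 * d 4 with hPdef
  have hQcont : Continuous Q := by
    simp only [hQdef]; continuity
  have hPQ : ∀ y : ℝ, HasDerivAt P (Q y) y := by
    intro y
    have hb1 : HasDerivAt (fun y : ℝ => b - y) (-1) y := by
      exact (hasDerivAt_id' y).const_sub b
    have H := (((((hasDerivAt_id y).const_mul (d 0)).sub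
      (((hb1.pow 2).div_const 2).mul_const (d 1))).sub
      (((hb1.pow 3).div_const 6).mul_const (d 2))).sub
      (((hb1.pow 4).div_const 24).mul_const (d 3))).sub
      (((hb1.pow 5).div_const 120).mul_const (d 4))
    have heq : Q y = d 0 * 1 - 2 * (b - y) ^ (2 - 1) * -1 / 2 * d 1
        - 3 * (b - y) ^ (3 - 1) * -1 / 6 * d 2 - 4 * (b - y) ^ (4 - 1) * -1 / 24 * d 3
        - 5 * (b - y) ^ (5 - 1) * -1 / 120 * d 4 := by
      simp only [hQdef]; norm_num; ring
    rw [heq]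
    exact H
  -- pointwise remainder bound on the left of b
  have hrb : ∀ y ∈ Icc (b - ε) b, |f y - Q y| ≤ C * (b - y) ^ 5 / 24 := by
    intro y hy
    have hx2 : 2 * b - y ∈ s := ⟨by linarith [hy.2], by linarith [hy.1]⟩
    have h5 := htay (2 * b - y) hx2
    have e1 : g (2 * b - y) = f y := by
      simp only [hgdef]
      rw [show 2 * b - (2 * b - y) = y by ring]
    have e2 : taylorWithinEval g 4 s b (2 * b - y) = Q y := by
      rw [hT]; simp only [hQdef]; ring
    rw [e1, e2, show 2 * b - y - b = b - y by ring] at h5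
    exact h5
  -- the main decomposition lemma for integrals over subintervals of [b-ε, b]
  have main : ∀ u v : ℝ, b - ε ≤ u → u ≤ v → v ≤ b →
      (∫ x in u..v, f x) = (P v - P u) + (∫ x in u..v, f x - Q x) ∧
      |∫ x in u..v, f x - Q x| ≤ C * (b - u) ^ 5 / 24 * (v - u) := by
    intro u v hu huv hvb
    have hfc : ContinuousOn f (uIcc u v) := by
      apply hf.continuousOn.mono
      intro x hx
      rw [uIcc_of_le huv] at hx
      exact hsub ⟨by linarith [hx.1], by linarith [hx.2, hε]⟩
    have hfint : IntervalIntegrable f volume u v := hfc.intervalIntegrable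
    have hQint : IntervalIntegrable Q volume u v := hQcont.intervalIntegrable _ _
    have hrint : IntervalIntegrable (fun x => f x - Q x) volume u v := hfint.sub hQint
    constructor
    · have h1 : (∫ x in u..v, f x) = (∫ x in u..v, Q x) + ∫ x in u..v, f x - Q x := by
        rw [← intervalIntegral.integral_add hQint hrint]
        congr 1; funext x; ring
      rw [h1, intervalIntegral.integral_eq_sub_of_hasDerivAt (fun y _ => hPQ y) hQint]
    · have hbd : ∀ x ∈ uIoc u v, ‖f x - Q x‖ ≤ C * (b - u) ^ 5 / 24 := by
        intro x hx
        rw [uIoc_of_le huv] at hx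
        have hmem : x ∈ Icc (b - ε) b := ⟨by linarith [hx.1], by linarith [hx.2]⟩
        refine (hrb x hmem).trans ?_
        have h1 : (b - x) ^ 5 ≤ (b - u) ^ 5 := by
          apply pow_le_pow_left₀ (by linarith [hx.2]) (by linarith [hx.1])
        have := mul_le_mul_of_nonneg_left h1 hCnn
        linarith
      have := intervalIntegral.norm_integral_le_of_norm_le_const hbd
      rw [Real.norm_eq_abs] at this
      rw [abs_of_nonneg (show (0:ℝ) ≤ v - u by linarith)] at this
      exact this
  -- now the quantitative statement
  refine ⟨380 * C + 1, by positivity, ε / 4, by positivity, ?_⟩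
  intro h hh hh0
  have hne : h ≠ 0 := ne_of_gt hh
  -- the four cells
  have m1 := main (b - 1 * h) (b - 0 * h) (by linarith) (by linarith) (by linarith)
  have m2 := main (b - 2 * h) (b - 1 * h) (by linarith) (by linarith) (by linarith)
  have m3 := main (b - 3 * h) (b - 2 * h) (by linarith) (by linarith) (by linarith)
  have m4 := main (b - 4 * h) (b - 3 * h) (by linarith) (by linarith) (by linarith)
  set E1 := ∫ x in (b - 1 * h)..(b - 0 * h), f x - Q x with hE1
  set E2 := ∫ x in (b - 2 * h)..(b - 1 * h), f x - Q x with hE2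
  set E3 := ∫ x in (b - 3 * h)..(b - 2 * h), f x - Q x with hE3
  set E4 := ∫ x in (b - 4 * h)..(b - 3 * h), f x - Q x with hE4
  have hc1 : cellAvg f b h (-1) = (1 / h) * ((P (b - 0 * h) - P (b - 1 * h)) + E1) := by
    rw [cellAvg, show (b + ((-1 : ℤ) : ℝ) * h) = b - 1 * h by push_cast; ring,
      show (b + (((-1 : ℤ) : ℝ) + 1) * h) = b - 0 * h by push_cast; ring, m1.1]
  have hc2 : cellAvg f b h (-2) = (1 / h) * ((P (b - 1 * h) - P (b - 2 * h)) + E2) := by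
    rw [cellAvg, show (b + ((-2 : ℤ) : ℝ) * h) = b - 2 * h by push_cast; ring,
      show (b + (((-2 : ℤ) : ℝ) + 1) * h) = b - 1 * h by push_cast; ring, m2.1]
  have hc3 : cellAvg f b h (-3) = (1 / h) * ((P (b - 2 * h) - P (b - 3 * h)) + E3) := by
    rw [cellAvg, show (b + ((-3 : ℤ) : ℝ) * h) = b - 3 * h by push_cast; ring,
      show (b + (((-3 : ℤ) : ℝ) + 1) * h) = b - 2 * h by push_cast; ring, m3.1]
  have hc4 : cellAvg f b h (-4) = (1 / h) * ((P (b - 3 * h) - P (b - 4 * h)) + E4) := by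
    rw [cellAvg, show (b + ((-4 : ℤ) : ℝ) * h) = b - 4 * h by push_cast; ring,
      show (b + (((-4 : ℤ) : ℝ) + 1) * h) = b - 3 * h by push_cast; ring, m4.1]
  -- bounds on the error integrals
  have hB : ∀ (k : ℝ) (E : ℝ), 1 ≤ k → k ≤ 4 →
      |E| ≤ C * (b - (b - k * h)) ^ 5 / 24 * ((b - (k - 1) * h) - (b - k * h)) →
      |E| ≤ (128 / 3) * C * h ^ 6 := by
    intro k E hk1 hk4 hE
    have e : C * (b - (b - k * h)) ^ 5 / 24 * ((b - (k - 1) * h) - (b - k * h))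
        = C * k ^ 5 * h ^ 6 / 24 := by ring
    rw [e] at hE
    refine hE.trans ?_
    have hk5 : k ^ 5 ≤ 1024 := by
      calc k ^ 5 ≤ 4 ^ 5 := pow_le_pow_left₀ (by linarith) hk4 5
        _ = 1024 := by norm_num
    have hh6 : (0 : ℝ) ≤ h ^ 6 := by positivity
    linarith [mul_le_mul_of_nonneg_right (mul_le_mul_of_nonneg_left hk5 hCnn) hh6]
  have hB1 : |E1| ≤ (128 / 3) * C * h ^ 6 := hB 1 E1 le_rfl (by norm_num) (by
    have := m1.2; norm_num at this ⊢; convert this using 2 <;> ring)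
  have hB2 : |E2| ≤ (128 / 3) * C * h ^ 6 := hB 2 E2 (by norm_num) (by norm_num) (by
    have := m2.2; norm_num at this ⊢; convert this using 2 <;> ring)
  have hB3 : |E3| ≤ (128 / 3) * C * h ^ 6 := hB 3 E3 (by norm_num) (by norm_num) (by
    have := m3.2; norm_num at this ⊢; convert this using 2 <;> ring)
  have hB4 : |E4| ≤ (128 / 3) * C * h ^ 6 := hB 4 E4 (by norm_num) (by norm_num) (by
    have := m4.2; norm_num at this ⊢; convert this using 2 <;> ring)
  have diff1 : P (b - 0 * h) - P (b - 1 * h)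
      = d 0 * h + h ^ 2 / 2 * d 1 + h ^ 3 / 6 * d 2 + h ^ 4 / 24 * d 3 + h ^ 5 / 120 * d 4 := by
    simp only [hPdef]; ring
  have diff2 : P (b - 1 * h) - P (b - 2 * h)
      = d 0 * h + 3 * h ^ 2 / 2 * d 1 + 7 * h ^ 3 / 6 * d 2 + 15 * h ^ 4 / 24 * d 3
        + 31 * h ^ 5 / 120 * d 4 := by
    simp only [hPdef]; ring
  have diff3 : P (b - 2 * h) - P (b - 3 * h)
      = d 0 * h + 5 * h ^ 2 / 2 * d 1 + 19 * h ^ 3 / 6 * d 2 + 65 * h ^ 4 / 24 * d 3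
        + 211 * h ^ 5 / 120 * d 4 := by
    simp only [hPdef]; ring
  have diff4 : P (b - 3 * h) - P (b - 4 * h)
      = d 0 * h + 7 * h ^ 2 / 2 * d 1 + 37 * h ^ 3 / 6 * d 2 + 175 * h ^ 4 / 24 * d 3
        + 781 * h ^ 5 / 120 * d 4 := by
    simp only [hPdef]; ring
  -- collapse: the scheme is exact on the Taylor polynomial
  have collapse : deriv f b - ((1 / (72 * h)) * (-415 * cellAvg f b h (-1)
      + 161 * cellAvg f b h (-2) - 55 * cellAvg f b h (-3) + 9 * cellAvg f b h (-4))
      + (25 / (6 * h)) * f b)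
      = (415 * E1 - 161 * E2 + 55 * E3 - 9 * E4) / (72 * (h * h)) := by
    rw [hc1, hc2, hc3, hc4, diff1, diff2, diff3, diff4, ← hd0,
      show deriv f b = -d 1 by rw [hd1]; ring]
    field_simp
    ring
  rw [collapse, abs_div, abs_of_pos (show (0:ℝ) < 72 * (h * h) by positivity),
    div_le_iff₀ (show (0:ℝ) < 72 * (h * h) by positivity)]
  have b1 := abs_le.mp hB1
  have b2 := abs_le.mp hB2
  have b3 := abs_le.mp hB3
  have b4 := abs_le.mp hB4
  have hX : |415 * E1 - 161 * E2 + 55 * E3 - 9 * E4| ≤ 640 * ((128 / 3) * C * h ^ 6) := by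
    rw [abs_le]; constructor <;> linarith [b1.1, b1.2, b2.1, b2.2, b3.1, b3.2, b4.1, b4.2]
  refine hX.trans ?_
  have hh6 : (0 : ℝ) ≤ h ^ 6 := by positivity
  linarith [mul_nonneg hCnn hh6]
end
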